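/- arXiv:2212.06093 — 4 statements merged into one kernel-verified Lean document; each statement's English description precedes it below -/
import Mathlib

section
/- Let Ω_{nℓ} ⊆ ℝ^N be an open, bounded, δ-connected set and let J satisfy the hypotheses below with the same δ. If v ∈ L²(Ω_{nℓ}) satisfies ∫_{Ω_{nℓ}} ∫_{Ω_{nℓ}} J(x−y) (v(y) − v(x))² dy dx = 0, then v is almost everywhere equal to a constant on Ω_{nℓ}. -/
open MeasureTheory Metric

/- Vanishing energy forces `v y = v x` for almost every pair with `‖x - y‖ ≤ 2δ`, where `J ≥ c`.
Points of `Ω` where this holds form a dense subset, and on it `v` is constant along chains of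
steps shorter than `2δ` (any two good points that close see a common positive-measure region of
equal values). Were `v` to take two values there, the `δ/2`-neighbourhoods of the two level sets
would split `Ω` into open pieces at distance `≥ δ`, contradicting `δ`-connectedness. -/

/-- An open set `D ⊆ ℝ^N` is `δ`-connected if it cannot be written as a disjoint union of
two nonempty (relatively) open sets that are at distance greater than or equal to `δ`. -/
def DeltaConnected {N : ℕ} (δ : ℝ) (D : Set (EuclideanSpace ℝ (Fin N))) : Prop :=
  ¬ ∃ A B : Set (EuclideanSpace ℝ (Fin N)),
      IsOpen A ∧ IsOpen B ∧ A.Nonempty ∧ B.Nonempty ∧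
      A ∪ B = D ∧ A ∩ B = ∅ ∧ ∀ x ∈ A, ∀ y ∈ B, δ ≤ dist x y

section Energy

variable {α : Type*} [MeasurableSpace α] {μ : Measure α}

theorem MeasureTheory.MemLp.integrable_kernel_mul_sq_sub [IsFiniteMeasure μ] {v : α → ℝ}
    (hv : MemLp v 2 μ) {K : α → α → ℝ} {M : ℝ}
    (hK : AEStronglyMeasurable (Function.uncurry K) (μ.prod μ)) (hKM : ∀ x y, ‖K x y‖ ≤ M) :
    Integrable (fun z : α × α => K z.1 z.2 * (v z.2 - v z.1) ^ 2) (μ.prod μ) :=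
  ((hv.comp_snd μ).sub (hv.comp_fst μ)).integrable_sq.bdd_mul hK
    (ae_of_all _ fun z => hKM z.1 z.2)

theorem ae_ae_eq_of_integral_integral_kernel_mul_sq_sub_eq_zero [SFinite μ]
    {K : α → α → ℝ} (hK : ∀ x y, 0 ≤ K x y) {v : α → ℝ}
    (hint : Integrable (fun z : α × α => K z.1 z.2 * (v z.2 - v z.1) ^ 2) (μ.prod μ))
    (hzero : ∫ x, ∫ y, K x y * (v y - v x) ^ 2 ∂μ ∂μ = 0) :
    ∀ᵐ x ∂μ, ∀ᵐ y ∂μ, K x y ≠ 0 → v y = v x := by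
  rw [integral_integral hint] at hzero
  have hae := (integral_eq_zero_iff_of_nonneg
    (fun z : α × α => mul_nonneg (hK z.1 z.2) (sq_nonneg _)) hint).1 hzero
  refine Measure.ae_ae_of_ae_prod (p := fun z => K z.1 z.2 ≠ 0 → v z.2 = v z.1)
    (hae.mono fun z hz hKz => ?_)
  simpa [hKz, sub_eq_zero] using hz

end Energy

theorem eq_of_ae_eq_of_dist_lt {X β : Type*} [PseudoMetricSpace X] [MeasurableSpace X]
    {ν : Measure X} [ν.IsOpenPosMeasure] {Ω : Set X} (hΩ : IsOpen Ω) {r : ℝ} {v : X → β}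
    {x y : X} (hxΩ : x ∈ Ω) (hxy : dist x y < r)
    (hx : ∀ᵐ z ∂ν.restrict Ω, dist x z < r → v z = v x)
    (hy : ∀ᵐ z ∂ν.restrict Ω, dist y z < r → v z = v y) : v x = v y := by
  have hxU : x ∈ Ω ∩ (ball x r ∩ ball y r) :=
    ⟨hxΩ, mem_ball_self (dist_nonneg.trans_lt hxy), mem_ball'.2 (dist_comm x y ▸ hxy)⟩
  have hU : ν (Ω ∩ (ball x r ∩ ball y r)) ≠ 0 :=
    (hΩ.inter (isOpen_ball.inter isOpen_ball)).measure_ne_zero ν ⟨x, hxU⟩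
  obtain ⟨z, ⟨-, hzx, hzy⟩, hvzx, hvzy⟩ := Measure.exists_mem_of_measure_ne_zero_of_ae hU
    (ae_restrict_of_ae_restrict_of_subset Set.inter_subset_left (hx.and hy))
  rw [← hvzx (mem_ball'.1 hzx), hvzy (mem_ball'.1 hzy)]

section DeltaConnected

variable {N : ℕ} {δ r : ℝ} {Ω : Set (EuclideanSpace ℝ (Fin N))} {β : Type*}

theorem DeltaConnected.eq_of_dense (hδ : 0 < δ) (hδr : δ < r) (hΩ : IsOpen Ω)
    (hconn : DeltaConnected δ Ω) {G : Set (EuclideanSpace ℝ (Fin N))} (hG : Dense G)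
    {f : EuclideanSpace ℝ (Fin N) → β}
    (hf : ∀ x ∈ Ω ∩ G, ∀ y ∈ Ω ∩ G, dist x y < r → f x = f y)
    {x₀ x₁ : EuclideanSpace ℝ (Fin N)} (hx₀ : x₀ ∈ Ω ∩ G) (hx₁ : x₁ ∈ Ω ∩ G) :
    f x₀ = f x₁ := by
  by_contra hne
  set ε := (r - δ) / 2
  have hε : 0 < ε := half_pos (sub_pos.2 hδr)
  set A := ⋃ x ∈ {x | x ∈ Ω ∩ G ∧ f x = f x₀}, ball x ε ∩ Ω
  set B := ⋃ x ∈ {x | x ∈ Ω ∩ G ∧ f x ≠ f x₀}, ball x ε ∩ Ω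
  have hsep : ∀ z ∈ A, ∀ w ∈ B, δ ≤ dist z w := by
    intro z hz w hw
    simp only [A, B, Set.mem_iUnion₂, Set.mem_inter_iff, Set.mem_ofPred_eq] at hz hw
    obtain ⟨x, ⟨hx, hfx⟩, hzx, -⟩ := hz
    obtain ⟨y, ⟨hy, hfy⟩, hwy, -⟩ := hw
    by_contra! hzw
    refine hfy (hfx ▸ (hf x hx y hy ?_).symm)
    calc dist x y ≤ dist x z + dist z w + dist w y := dist_triangle4 _ _ _ _
      _ < ε + δ + ε := by gcongr; exacts [mem_ball'.1 hzx, mem_ball.1 hwy]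
      _ = r := by ring
  refine hconn ⟨A, B, isOpen_biUnion fun _ _ => isOpen_ball.inter hΩ,
    isOpen_biUnion fun _ _ => isOpen_ball.inter hΩ,
    ⟨x₀, Set.mem_biUnion ⟨hx₀, rfl⟩ ⟨mem_ball_self hε, hx₀.1⟩⟩,
    ⟨x₁, Set.mem_biUnion ⟨hx₁, Ne.symm hne⟩ ⟨mem_ball_self hε, hx₁.1⟩⟩, ?_, ?_, hsep⟩
  · refine (Set.union_subset (Set.iUnion₂_subset fun _ _ => Set.inter_subset_right)
      (Set.iUnion₂_subset fun _ _ => Set.inter_subset_right)).antisymm fun z hz => ?_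
    obtain ⟨g, ⟨hzg, hgΩ⟩, hgG⟩ :=
      hG.inter_open_nonempty _ (isOpen_ball.inter hΩ) ⟨z, mem_ball_self hε, hz⟩
    have hz' : z ∈ ball g ε ∩ Ω := ⟨mem_ball_comm.1 hzg, hz⟩
    by_cases hfg : f g = f x₀
    · exact Or.inl (Set.mem_biUnion ⟨⟨hgΩ, hgG⟩, hfg⟩ hz')
    · exact Or.inr (Set.mem_biUnion ⟨⟨hgΩ, hgG⟩, hfg⟩ hz')
  · refine Set.eq_empty_iff_forall_notMem.2 fun z ⟨hzA, hzB⟩ => ?_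
    exact (dist_self z ▸ hsep z hzA z hzB).not_gt hδ

theorem DeltaConnected.exists_ae_eq_const [Nonempty β] (hδ : 0 < δ) (hδr : δ < r)
    (hΩ : IsOpen Ω) (hconn : DeltaConnected δ Ω) {ν : Measure (EuclideanSpace ℝ (Fin N))}
    [ν.IsOpenPosMeasure] {v : EuclideanSpace ℝ (Fin N) → β}
    (h : ∀ᵐ x ∂ν.restrict Ω, ∀ᵐ y ∂ν.restrict Ω, dist x y < r → v y = v x) :
    ∃ c, ∀ᵐ x ∂ν.restrict Ω, v x = c := by
  set G := {x | x ∈ Ω → ∀ᵐ y ∂ν.restrict Ω, dist x y < r → v y = v x}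
  have hG : Dense G := Measure.dense_of_ae ((ae_restrict_iff' hΩ.measurableSet).1 h)
  have hlocal : ∀ x ∈ Ω ∩ G, ∀ y ∈ Ω ∩ G, dist x y < r → v x = v y :=
    fun x hx y hy hxy => eq_of_ae_eq_of_dist_lt hΩ hx.1 hxy (hx.2 hx.1) (hy.2 hy.1)
  rcases Ω.eq_empty_or_nonempty with rfl | hne
  · exact ⟨Classical.arbitrary β, by simp⟩
  obtain ⟨x₀, hx₀⟩ := hG.inter_open_nonempty Ω hΩ hne
  refine ⟨v x₀, ?_⟩
  filter_upwards [h, ae_restrict_mem hΩ.measurableSet] with x hx hxΩ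
  exact hconn.eq_of_dense hδ hδr hΩ hG hlocal ⟨hxΩ, fun _ => hx⟩ hx₀

end DeltaConnected

theorem ae_const_of_nonlocal_energy_eq_zero_general {N : ℕ} (δ : ℝ) (hδ : 0 < δ)
    (Ωnl : Set (EuclideanSpace ℝ (Fin N)))
    (hΩnl_open : IsOpen Ωnl) (hΩnl_bdd : Bornology.IsBounded Ωnl)
    (hΩnl_conn : DeltaConnected δ Ωnl)
    (J : EuclideanSpace ℝ (Fin N) → ℝ)
    (hJ_nonneg : ∀ z, 0 ≤ J z)
    (hJ_bdd : ∃ M : ℝ, ∀ z, J z ≤ M)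
    (hJ_int : Integrable J)
    (hJ1 : ∃ c > (0 : ℝ), ∀ z, ‖z‖ ≤ 2 * δ → c ≤ J z)
    (v : EuclideanSpace ℝ (Fin N) → ℝ)
    (hv : MemLp v 2 (volume.restrict Ωnl))
    (hzero : ∫ x in Ωnl, ∫ y in Ωnl, J (x - y) * (v y - v x) ^ 2 = 0) :
    ∃ c : ℝ, ∀ᵐ x ∂(volume.restrict Ωnl), v x = c := by
  obtain ⟨c, hc, hcJ⟩ := hJ1
  obtain ⟨M, hM⟩ := hJ_bdd
  have : IsFiniteMeasure (volume.restrict Ωnl) :=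
    isFiniteMeasure_restrict.2 hΩnl_bdd.measure_lt_top.ne
  have hJm : AEStronglyMeasurable (Function.uncurry fun x y => J (x - y))
      ((volume.restrict Ωnl).prod (volume.restrict Ωnl)) := by
    rw [Measure.prod_restrict]
    exact (hJ_int.aestronglyMeasurable.comp_quasiMeasurePreserving
      (quasiMeasurePreserving_sub volume volume)).restrict
  have hint := hv.integrable_kernel_mul_sq_sub hJm
    fun x y => (Real.norm_of_nonneg (hJ_nonneg _)).trans_le (hM _)
  have hae := ae_ae_eq_of_integral_integral_kernel_mul_sq_sub_eq_zero
    (fun x y => hJ_nonneg (x - y)) hint hzero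
  refine hΩnl_conn.exists_ae_eq_const hδ (by linarith : δ < 2 * δ) hΩnl_open ?_
  filter_upwards [hae] with x hx
  filter_upwards [hx] with y hy hxy
  exact hy (hc.trans_le (hcJ _ (dist_eq_norm x y ▸ hxy.le))).ne'

/-- If the nonlocal energy of `v ∈ L²(Ω_{nℓ})` vanishes, then `v` is a.e. constant on the
bounded open `δ`-connected set `Ω_{nℓ}`. -/
theorem ae_const_of_nonlocal_energy_eq_zero {N : ℕ} (δ : ℝ) (hδ : 0 < δ)
    (Ωnl : Set (EuclideanSpace ℝ (Fin N)))
    (hΩnl_open : IsOpen Ωnl) (hΩnl_bdd : Bornology.IsBounded Ωnl)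
    (hΩnl_conn : DeltaConnected δ Ωnl)
    (J : EuclideanSpace ℝ (Fin N) → ℝ)
    (hJ_nonneg : ∀ z, 0 ≤ J z)
    (hJ_symm : ∀ z, J (-z) = J z)
    (hJ_bdd : ∃ M : ℝ, ∀ z, J z ≤ M)
    (hJ_int : Integrable J)
    (hJ1 : ∃ c > (0 : ℝ), ∀ z, ‖z‖ ≤ 2 * δ → c ≤ J z)
    (v : EuclideanSpace ℝ (Fin N) → ℝ)
    (hv : MemLp v 2 (volume.restrict Ωnl))
    (hzero : ∫ x in Ωnl, ∫ y in Ωnl, J (x - y) * (v y - v x) ^ 2 = 0) :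
    ∃ c : ℝ, ∀ᵐ x ∂(volume.restrict Ωnl), v x = c :=
  ae_const_of_nonlocal_energy_eq_zero_general δ hδ Ωnl hΩnl_open hΩnl_bdd hΩnl_conn J hJ_nonneg
    hJ_bdd hJ_int hJ1 v hv hzero
end

section
/- Assume Ω_{nℓ} ⊆ ℝ^N is open, bounded and δ-connected and that J satisfies (J1) and (J2). Then there exists a constant C > 0, depending only on Ω_{nℓ} and J, such that every v ∈ L²(Ω_{nℓ}) with ∫_{Ω_{nℓ}} v(x) dx = 0 satisfies ‖v‖²_{L²(Ω_{nℓ})} ≤ C ∫_{Ω_{nℓ}} ∫_{Ω_{nℓ}} J(x−y) (v(y) − v(x))² dy dx. -/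
open MeasureTheory Metric

/-!
Cover `Ω` by finitely many pieces `Uᵢ = B(tᵢ, δ/4) ∩ Ω`. If two pieces are equal or contain
points at distance `< δ`, then `J(x - y) ≥ c` on `Uᵢ × Uⱼ`, so the energy `E(v)` bounds
`c ∫_{Uᵢ} ∫_{Uⱼ} (v y - v x)²`. By the parallel-axis identity this double integral controls both
the variance of `v` on each piece and `|Uᵢ| |Uⱼ| (aᵢ - aⱼ)²`, where `aᵢ` is the mean of `v` on
`Uᵢ`. Since `Ω` is `δ`-connected, the graph of `δ`-close pieces is connected, so chaining along
shortest paths bounds every `(aᵢ - a₀)²` by a multiple of `E(v)`. Finally, as `v` has mean zero,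
`∫_Ω v² ≤ ∫_Ω (v - a₀)² ≤ ∑ᵢ (∫_{Uᵢ} (v - aᵢ)² + |Uᵢ| (aᵢ - a₀)²)`.
-/

theorem integral_le_sum_setIntegral_of_ae_cover {X ι : Type*} [MeasurableSpace X] [Fintype ι]
    {ν : Measure X} {f : X → ℝ} (hf : Integrable f ν) (hf_nonneg : ∀ x, 0 ≤ f x)
    {B : ι → Set X} (hB : ∀ i, MeasurableSet (B i)) (hcover : ∀ᵐ x ∂ν, ∃ i, x ∈ B i) :
    ∫ x, f x ∂ν ≤ ∑ i, ∫ x in B i, f x ∂ν := by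
  have hind : ∀ i, Integrable ((B i).indicator f) ν := fun i => hf.indicator (hB i)
  calc ∫ x, f x ∂ν ≤ ∫ x, ∑ i, (B i).indicator f x ∂ν := by
        refine integral_mono_ae hf (integrable_finsetSum _ fun i _ => hind i) ?_
        filter_upwards [hcover] with x ⟨i, hi⟩
        calc f x = (B i).indicator f x := (Set.indicator_of_mem hi f).symm
          _ ≤ ∑ j, (B j).indicator f x :=
            Finset.single_le_sum (fun j _ => Set.indicator_nonneg (fun y _ => hf_nonneg y) x)
              (Finset.mem_univ i)
    _ = ∑ i, ∫ x in B i, f x ∂ν := by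
        rw [integral_finsetSum _ fun i _ => hind i]
        simp only [integral_indicator (hB _)]

theorem SimpleGraph.Walk.abs_sub_le_length_mul {V : Type*} {G : SimpleGraph V} {f : V → ℝ}
    {q : ℝ} (hf : ∀ i j, G.Adj i j → |f i - f j| ≤ q) {u w : V} (p : G.Walk u w) :
    |f u - f w| ≤ p.length * q := by
  induction p with
  | nil => simp
  | @cons u v w h p ih =>
    rw [SimpleGraph.Walk.length_cons, Nat.cast_succ]
    linarith [abs_sub_le (f u) (f v) (f w), hf u v h]

section Variance

variable {X : Type*} [MeasurableSpace X] {ν ν' : Measure X} [IsFiniteMeasure ν]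
  [IsFiniteMeasure ν'] {v : X → ℝ}

theorem integral_sub_sq_eq_integral_sub_average_sq_add (hv : MemLp v 2 ν) (b : ℝ) :
    ∫ x, (v x - b) ^ 2 ∂ν =
      ∫ x, (v x - ⨍ y, v y ∂ν) ^ 2 ∂ν + ν.real Set.univ * (⨍ y, v y ∂ν - b) ^ 2 := by
  set a := ⨍ y, v y ∂ν
  have hdev : Integrable (fun x => v x - a) ν := (hv.integrable one_le_two).sub (integrable_const a)
  have hdev_sq : Integrable (fun x => (v x - a) ^ 2) ν := (hv.sub (memLp_const a)).integrable_sq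
  calc ∫ x, (v x - b) ^ 2 ∂ν
      = ∫ x, ((v x - a) ^ 2 + 2 * (a - b) * (v x - a) + (a - b) ^ 2) ∂ν := by
        congr 1; ext x; ring
    _ = ∫ x, (v x - a) ^ 2 ∂ν + 2 * (a - b) * ∫ x, (v x - a) ∂ν
          + ν.real Set.univ * (a - b) ^ 2 := by
        have hlin : Integrable (fun x => (v x - a) ^ 2 + 2 * (a - b) * (v x - a)) ν :=
          hdev_sq.add (hdev.const_mul _)
        rw [integral_add hlin (integrable_const _), integral_add hdev_sq (hdev.const_mul _),
          integral_const_mul, integral_const, smul_eq_mul]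
    _ = _ := by rw [integral_sub_average ν v]; ring

theorem integral_integral_sub_sq_eq (hv : MemLp v 2 ν) (hv' : MemLp v 2 ν') :
    ∫ x, ∫ y, (v y - v x) ^ 2 ∂ν' ∂ν =
      ν'.real Set.univ * ∫ x, (v x - ⨍ z, v z ∂ν) ^ 2 ∂ν
        + ν.real Set.univ * ∫ y, (v y - ⨍ z, v z ∂ν') ^ 2 ∂ν'
        + ν.real Set.univ * ν'.real Set.univ * (⨍ z, v z ∂ν - ⨍ z, v z ∂ν') ^ 2 := by
  set a' := ⨍ z, v z ∂ν'
  have hdev_sq : Integrable (fun x => (v x - a') ^ 2) ν := (hv.sub (memLp_const a')).integrable_sq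
  calc ∫ x, ∫ y, (v y - v x) ^ 2 ∂ν' ∂ν
      = ∫ x, (∫ y, (v y - a') ^ 2 ∂ν' + ν'.real Set.univ * (v x - a') ^ 2) ∂ν := by
        congr 1; ext x; rw [integral_sub_sq_eq_integral_sub_average_sq_add hv']; ring
    _ = ν.real Set.univ * ∫ y, (v y - a') ^ 2 ∂ν' + ν'.real Set.univ * ∫ x, (v x - a') ^ 2 ∂ν := by
        rw [integral_add (integrable_const _) (hdev_sq.const_mul _), integral_const,
          integral_const_mul, smul_eq_mul]
    _ = _ := by rw [integral_sub_sq_eq_integral_sub_average_sq_add hv]; ring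

theorem integral_integral_sub_sq_self (hv : MemLp v 2 ν) :
    ∫ x, ∫ y, (v y - v x) ^ 2 ∂ν ∂ν = 2 * ν.real Set.univ * ∫ x, (v x - ⨍ z, v z ∂ν) ^ 2 ∂ν := by
  rw [integral_integral_sub_sq_eq hv hv]; ring

theorem mul_sq_average_sub_average_le (hv : MemLp v 2 ν) (hv' : MemLp v 2 ν') :
    ν.real Set.univ * ν'.real Set.univ * (⨍ z, v z ∂ν - ⨍ z, v z ∂ν') ^ 2 ≤
      ∫ x, ∫ y, (v y - v x) ^ 2 ∂ν' ∂ν := by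
  rw [integral_integral_sub_sq_eq hv hv']
  refine le_add_of_nonneg_left (add_nonneg ?_ ?_) <;>
    exact mul_nonneg measureReal_nonneg (integral_nonneg fun _ => sq_nonneg _)

theorem integral_sq_le_integral_sub_sq (hv : MemLp v 2 ν) (hmean : ∫ x, v x ∂ν = 0) (b : ℝ) :
    ∫ x, v x ^ 2 ∂ν ≤ ∫ x, (v x - b) ^ 2 ∂ν := by
  have havg : ⨍ x, v x ∂ν = 0 := by rw [average_eq, hmean, smul_zero]
  have h := integral_sub_sq_eq_integral_sub_average_sq_add hv b
  simp only [havg, sub_zero] at h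
  rw [h]
  exact le_add_of_nonneg_right (mul_nonneg measureReal_nonneg (sq_nonneg _))

end Variance

section Energy

variable {X : Type*} [MeasurableSpace X] {ν : Measure X} {v : X → ℝ} {K : X → X → ℝ}
  {M c : ℝ} {P Q : Set X}

noncomputable def nonlocalEnergy (ν : Measure X) (K : X → X → ℝ) (v : X → ℝ) : ℝ :=
  ∫ x, ∫ y, K x y * (v y - v x) ^ 2 ∂ν ∂ν

theorem nonlocalEnergy_nonneg (hK_nonneg : ∀ x y, 0 ≤ K x y) :
    0 ≤ nonlocalEnergy ν K v :=
  integral_nonneg fun _ => integral_nonneg fun _ => mul_nonneg (hK_nonneg _ _) (sq_nonneg _)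

variable [IsFiniteMeasure ν]

theorem integrable_sub_sq_prod (hv : MemLp v 2 ν) :
    Integrable (fun p : X × X => (v p.2 - v p.1) ^ 2) (ν.prod ν) := by
  have hv1 := hv.integrable one_le_two
  have hsq₁ := hv.integrable_sq.mul_prod (integrable_const (1 : ℝ) : Integrable _ ν)
  have hsq₂ := (integrable_const (1 : ℝ) : Integrable _ ν).mul_prod hv.integrable_sq
  refine ((hsq₁.add hsq₂).sub ((hv1.mul_prod hv1).const_mul 2)).congr (ae_of_all _ fun p => ?_)
  simp only [Pi.add_apply, Pi.sub_apply]
  ring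

theorem mul_setIntegral_setIntegral_sub_sq_le_nonlocalEnergy
    (hK_meas : AEStronglyMeasurable (Function.uncurry K) (ν.prod ν))
    (hK_nonneg : ∀ x y, 0 ≤ K x y) (hK_bdd : ∀ x y, K x y ≤ M) (hv : MemLp v 2 ν)
    (hP : MeasurableSet P) (hQ : MeasurableSet Q)
    (hKc : ∀ x ∈ P, ∀ y ∈ Q, c ≤ K x y) :
    c * ∫ x in P, ∫ y in Q, (v y - v x) ^ 2 ∂ν ∂ν ≤ nonlocalEnergy ν K v := by
  have hsq := integrable_sub_sq_prod hv
  have hF : Integrable (fun p : X × X => K p.1 p.2 * (v p.2 - v p.1) ^ 2) (ν.prod ν) :=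
    hsq.bdd_mul hK_meas (ae_of_all _ fun p => by
      rw [Real.norm_eq_abs, abs_of_nonneg (hK_nonneg _ _)]; exact hK_bdd _ _)
  calc c * ∫ x in P, ∫ y in Q, (v y - v x) ^ 2 ∂ν ∂ν
      = ∫ p in P ×ˢ Q, c * (v p.2 - v p.1) ^ 2 ∂ν.prod ν := by
        rw [setIntegral_prod _ (hsq.const_mul c).integrableOn]
        simp only [integral_const_mul]
    _ ≤ ∫ p in P ×ˢ Q, K p.1 p.2 * (v p.2 - v p.1) ^ 2 ∂ν.prod ν :=
        setIntegral_mono_on (hsq.const_mul c).integrableOn hF.integrableOn (hP.prod hQ)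
          fun p hp => mul_le_mul_of_nonneg_right (hKc _ hp.1 _ hp.2) (sq_nonneg _)
    _ ≤ ∫ p, K p.1 p.2 * (v p.2 - v p.1) ^ 2 ∂ν.prod ν :=
        setIntegral_le_integral hF (ae_of_all _ fun p => mul_nonneg (hK_nonneg _ _) (sq_nonneg _))
    _ = nonlocalEnergy ν K v := integral_prod _ hF

theorem setIntegral_sub_setAverage_sq_le_nonlocalEnergy
    (hK_meas : AEStronglyMeasurable (Function.uncurry K) (ν.prod ν))
    (hK_nonneg : ∀ x y, 0 ≤ K x y) (hK_bdd : ∀ x y, K x y ≤ M) (hv : MemLp v 2 ν)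
    (hc : 0 < c) (hP : MeasurableSet P) (hP_pos : 0 < ν.real P)
    (hKc : ∀ x ∈ P, ∀ y ∈ P, c ≤ K x y) :
    ∫ x in P, (v x - ⨍ z in P, v z ∂ν) ^ 2 ∂ν ≤ nonlocalEnergy ν K v / (2 * c * ν.real P) := by
  have h :=
    mul_setIntegral_setIntegral_sub_sq_le_nonlocalEnergy hK_meas hK_nonneg hK_bdd hv hP hP hKc
  rw [integral_integral_sub_sq_self (hv.restrict P), measureReal_restrict_apply_univ] at h
  rw [le_div_iff₀ (by positivity)]
  linarith

theorem abs_setAverage_sub_setAverage_le_nonlocalEnergy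
    (hK_meas : AEStronglyMeasurable (Function.uncurry K) (ν.prod ν))
    (hK_nonneg : ∀ x y, 0 ≤ K x y) (hK_bdd : ∀ x y, K x y ≤ M) (hv : MemLp v 2 ν)
    (hc : 0 < c) (hP : MeasurableSet P) (hQ : MeasurableSet Q) {m : ℝ} (hm : 0 < m)
    (hmP : m ≤ ν.real P) (hmQ : m ≤ ν.real Q) (hKc : ∀ x ∈ P, ∀ y ∈ Q, c ≤ K x y) :
    |⨍ z in P, v z ∂ν - ⨍ z in Q, v z ∂ν| ≤ √(nonlocalEnergy ν K v / (c * m ^ 2)) := by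
  have h := mul_sq_average_sub_average_le (hv.restrict P) (hv.restrict Q)
  rw [measureReal_restrict_apply_univ, measureReal_restrict_apply_univ] at h
  have hE := (mul_le_mul_of_nonneg_left h hc.le).trans
    (mul_setIntegral_setIntegral_sub_sq_le_nonlocalEnergy hK_meas hK_nonneg hK_bdd hv hP hQ hKc)
  have hmm : m * m ≤ ν.real P * ν.real Q := mul_le_mul hmP hmQ hm.le (hm.le.trans hmP)
  rw [← Real.sqrt_sq_eq_abs]
  refine Real.sqrt_le_sqrt ((le_div_iff₀ (by positivity)).2 ?_)
  nlinarith [mul_le_mul_of_nonneg_left hmm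
    (mul_nonneg hc.le (sq_nonneg (⨍ z in P, v z ∂ν - ⨍ z in Q, v z ∂ν)))]

end Energy

theorem exists_integral_sq_le_mul_nonlocalEnergy_of_cover {X ι : Type*} [MeasurableSpace X]
    [Fintype ι] {ν : Measure X} [IsFiniteMeasure ν] {K : X → X → ℝ} {M c : ℝ}
    (hK_meas : AEStronglyMeasurable (Function.uncurry K) (ν.prod ν))
    (hK_nonneg : ∀ x y, 0 ≤ K x y) (hK_bdd : ∀ x y, K x y ≤ M) (hc : 0 < c)
    {B : ι → Set X} (hB : ∀ i, MeasurableSet (B i)) (hB_pos : ∀ i, ν (B i) ≠ 0)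
    (hcover : ∀ᵐ x ∂ν, ∃ i, x ∈ B i) {G : SimpleGraph ι} (hG : G.Connected)
    (hKc : ∀ i j, (i = j ∨ G.Adj i j) → ∀ x ∈ B i, ∀ y ∈ B j, c ≤ K x y) :
    ∃ C > 0, ∀ v : X → ℝ, MemLp v 2 ν → ∫ x, v x ∂ν = 0 →
      ∫ x, v x ^ 2 ∂ν ≤ C * nonlocalEnergy ν K v := by
  obtain ⟨i₀, -⟩ := (G.connected_iff_exists_forall_reachable).1 hG
  have : Nonempty ι := ⟨i₀⟩
  set m : ι → ℝ := fun i => ν.real (B i)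
  have hm : ∀ i, 0 < m i := fun i => ENNReal.toReal_pos (hB_pos i) (measure_ne_top _ _)
  obtain ⟨k, hk⟩ := Finite.exists_min m
  refine ⟨∑ i, (1 / (2 * c * m i) + m i * G.dist i₀ i ^ 2 / (c * m k ^ 2)),
    Finset.sum_pos (fun i _ => by have := hm i; have := hm k; positivity) Finset.univ_nonempty,
    fun v hv hmean => ?_⟩
  set E := nonlocalEnergy ν K v
  set a : ι → ℝ := fun i => ⨍ x in B i, v x ∂ν
  have hE : 0 ≤ E / (c * m k ^ 2) :=
    div_nonneg (nonlocalEnergy_nonneg hK_nonneg) (by have := hm k; positivity)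
  have hstep : ∀ i j, G.Adj i j → |a i - a j| ≤ √(E / (c * m k ^ 2)) := fun i j hij =>
    abs_setAverage_sub_setAverage_le_nonlocalEnergy hK_meas hK_nonneg hK_bdd hv hc (hB i) (hB j)
      (hm k) (hk i) (hk j) (hKc i j (Or.inr hij))
  have hchain : ∀ i, (a i - a i₀) ^ 2 ≤ G.dist i₀ i ^ 2 * (E / (c * m k ^ 2)) := by
    intro i
    obtain ⟨p, hp⟩ := hG.exists_walk_length_eq_dist i₀ i
    have h := p.abs_sub_le_length_mul hstep
    rw [hp] at h
    calc (a i - a i₀) ^ 2 = |a i₀ - a i| ^ 2 := by rw [sq_abs]; ring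
      _ ≤ (G.dist i₀ i * √(E / (c * m k ^ 2))) ^ 2 := pow_le_pow_left₀ (abs_nonneg _) h 2
      _ = _ := by rw [mul_pow, Real.sq_sqrt hE]
  calc ∫ x, v x ^ 2 ∂ν ≤ ∫ x, (v x - a i₀) ^ 2 ∂ν := integral_sq_le_integral_sub_sq hv hmean _
    _ ≤ ∑ i, ∫ x in B i, (v x - a i₀) ^ 2 ∂ν :=
        integral_le_sum_setIntegral_of_ae_cover (hv.sub (memLp_const _)).integrable_sq
          (fun _ => sq_nonneg _) hB hcover
    _ = ∑ i, (∫ x in B i, (v x - a i) ^ 2 ∂ν + m i * (a i - a i₀) ^ 2) :=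
        Finset.sum_congr rfl fun i _ => by
          rw [integral_sub_sq_eq_integral_sub_average_sq_add (hv.restrict _),
            measureReal_restrict_apply_univ]
    _ ≤ ∑ i, (E / (2 * c * m i) + m i * (G.dist i₀ i ^ 2 * (E / (c * m k ^ 2)))) :=
        Finset.sum_le_sum fun i _ => add_le_add
          (setIntegral_sub_setAverage_sq_le_nonlocalEnergy hK_meas hK_nonneg hK_bdd hv hc (hB i)
            (hm i) (hKc i i (Or.inl rfl)))
          (mul_le_mul_of_nonneg_left (hchain i) (hm i).le)
    _ = _ := by
        rw [Finset.sum_mul]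
        exact Finset.sum_congr rfl fun i _ => by ring

theorem MeasureTheory.AEStronglyMeasurable.comp_sub_prod_restrict {G β : Type*} [AddGroup G]
    [MeasurableSpace G] [MeasurableAdd₂ G] [MeasurableNeg G] [TopologicalSpace β] {μ : Measure G}
    [SFinite μ] [μ.IsAddLeftInvariant] {J : G → β} (hJ : AEStronglyMeasurable J μ) (s : Set G) :
    AEStronglyMeasurable (Function.uncurry fun x y => J (x - y))
      ((μ.restrict s).prod (μ.restrict s)) :=
  (hJ.comp_quasiMeasurePreserving (quasiMeasurePreserving_sub μ μ)).mono_ac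
    ((Measure.absolutelyContinuous_of_le Measure.restrict_le_self).prod
      (Measure.absolutelyContinuous_of_le Measure.restrict_le_self))

section ProximityGraph

variable {α ι : Type*} [PseudoMetricSpace α] {δ : ℝ} {U : ι → Set α}

def proximityGraph (δ : ℝ) (U : ι → Set α) : SimpleGraph ι :=
  SimpleGraph.fromRel fun i j => ∃ x ∈ U i, ∃ y ∈ U j, dist x y < δ

theorem proximityGraph_reachable_of_dist_lt {i j : ι} {x y : α} (hx : x ∈ U i) (hy : y ∈ U j)
    (hxy : dist x y < δ) : (proximityGraph δ U).Reachable i j := by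
  rcases eq_or_ne i j with rfl | hij
  · rfl
  · exact SimpleGraph.Adj.reachable
      ((SimpleGraph.fromRel_adj _ _ _).2 ⟨hij, Or.inl ⟨x, hx, y, hy, hxy⟩⟩)

theorem dist_lt_of_eq_or_proximityGraph_adj (hδ : 0 ≤ δ) {r : ℝ} {t : ι → α}
    (hU : ∀ i, U i ⊆ ball (t i) r) {i j : ι} (hij : i = j ∨ (proximityGraph δ U).Adj i j)
    {x y : α} (hx : x ∈ U i) (hy : y ∈ U j) : dist x y < δ + 4 * r := by
  have hball : ∀ k, ∀ z ∈ U k, ∀ z' ∈ U k, dist z z' < 2 * r := fun k z hz z' hz' =>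
    (dist_triangle_right z z' (t k)).trans_lt
      (by linarith [mem_ball.1 (hU k hz), mem_ball.1 (hU k hz')])
  rcases hij with rfl | hadj
  · linarith [hball i x hx y hy, dist_nonneg.trans_lt (mem_ball.1 (hU i hx))]
  obtain ⟨-, ⟨x', hx', y', hy', h⟩ | ⟨y', hy', x', hx', h⟩⟩ :=
    (SimpleGraph.fromRel_adj _ _ _).1 hadj
  all_goals
    linarith [dist_triangle4 x x' y' y, hball i x hx x' hx', hball j y' hy' y hy, dist_comm x' y']

end ProximityGraph

theorem Bornology.IsBounded.exists_finite_iUnion_ball_inter_eq {α : Type*}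
    [PseudoMetricSpace α] [ProperSpace α] {s : Set α} (hs : Bornology.IsBounded s) {r : ℝ}
    (hr : 0 < r) : ∃ T ⊆ s, T.Finite ∧ ⋃ t : T, ball (t : α) r ∩ s = s := by
  obtain ⟨T, hTs, hT_fin, hT_cover⟩ :=
    finite_approx_of_totallyBounded (hs.isCompact_closure.totallyBounded.subset subset_closure) r hr
  refine ⟨T, hTs, hT_fin, (Set.iUnion_subset fun t => Set.inter_subset_right).antisymm
    fun x hx => ?_⟩
  obtain ⟨t, ht, hxt⟩ := Set.mem_iUnion₂.1 (hT_cover hx)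
  exact Set.mem_iUnion.2 ⟨⟨t, ht⟩, hxt, hx⟩

theorem DeltaConnected.proximityGraph_connected {N : ℕ} {δ : ℝ} (hδ : 0 < δ)
    {D : Set (EuclideanSpace ℝ (Fin N))} (hD : DeltaConnected δ D) {ι : Type*} [Nonempty ι]
    {U : ι → Set (EuclideanSpace ℝ (Fin N))} (hU_open : ∀ i, IsOpen (U i))
    (hU_ne : ∀ i, (U i).Nonempty) (hU_cover : ⋃ i, U i = D) :
    (proximityGraph δ U).Connected := by
  obtain ⟨i₀⟩ := ‹Nonempty ι›
  set S := {i | (proximityGraph δ U).Reachable i₀ i}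
  have hS : ∀ i ∈ S, ∀ j, ∀ x ∈ U i, ∀ y ∈ U j, dist x y < δ → j ∈ S :=
    fun i hi j x hx y hy hxy => hi.trans (proximityGraph_reachable_of_dist_lt hx hy hxy)
  refine (SimpleGraph.connected_iff_exists_forall_reachable _).2 ⟨i₀, fun j => ?_⟩
  by_contra hj
  refine hD ⟨⋃ i ∈ S, U i, ⋃ i ∈ Sᶜ, U i, isOpen_biUnion fun i _ => hU_open i,
    isOpen_biUnion fun i _ => hU_open i, Set.nonempty_biUnion.2 ⟨i₀, .rfl, hU_ne i₀⟩,
    Set.nonempty_biUnion.2 ⟨j, hj, hU_ne j⟩, ?_, ?_, ?_⟩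
  · rw [← Set.biUnion_union, Set.union_compl_self, Set.biUnion_univ, hU_cover]
  · refine Set.eq_empty_iff_forall_notMem.2 fun x ⟨hxS, hxSc⟩ => ?_
    obtain ⟨i, hi, hxi⟩ := Set.mem_iUnion₂.1 hxS
    obtain ⟨k, hk, hxk⟩ := Set.mem_iUnion₂.1 hxSc
    exact hk (hS i hi k x hxi x hxk (by rwa [dist_self]))
  · intro x hx y hy
    obtain ⟨i, hi, hxi⟩ := Set.mem_iUnion₂.1 hx
    obtain ⟨k, hk, hyk⟩ := Set.mem_iUnion₂.1 hy
    exact not_lt.1 fun hxy => hk (hS i hi k x hxi y hyk hxy)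

theorem nonlocal_poincare_mean_zero_general {N : ℕ} (δ : ℝ) (hδ : 0 < δ)
    (Ωnl : Set (EuclideanSpace ℝ (Fin N)))
    (hΩnl_open : IsOpen Ωnl) (hΩnl_bdd : Bornology.IsBounded Ωnl)
    (hΩnl_conn : DeltaConnected δ Ωnl)
    (J : EuclideanSpace ℝ (Fin N) → ℝ)
    (hJ_nonneg : ∀ z, 0 ≤ J z)
    (hJ_bdd : ∃ M : ℝ, ∀ z, J z ≤ M)
    (hJ_int : Integrable J)
    (hJ1 : ∃ c > (0 : ℝ), ∀ z, ‖z‖ ≤ 2 * δ → c ≤ J z) :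
    ∃ C > (0 : ℝ), ∀ v : EuclideanSpace ℝ (Fin N) → ℝ,
      MemLp v 2 (volume.restrict Ωnl) → (∫ x in Ωnl, v x = 0) →
      ∫ x in Ωnl, (v x) ^ 2 ≤
        C * ∫ x in Ωnl, ∫ y in Ωnl, J (x - y) * (v y - v x) ^ 2 := by
  obtain ⟨c, hc, hJc⟩ := hJ1
  obtain ⟨M, hM⟩ := hJ_bdd
  rcases Ωnl.eq_empty_or_nonempty with rfl | ⟨x₀, hx₀⟩
  · exact ⟨1, one_pos, fun v _ _ => by simp⟩
  have : IsFiniteMeasure (volume.restrict Ωnl) :=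
    isFiniteMeasure_restrict.2 hΩnl_bdd.measure_lt_top.ne
  obtain ⟨T, hTΩ, hT_fin, hU_cover⟩ :=
    hΩnl_bdd.exists_finite_iUnion_ball_inter_eq (by positivity : 0 < δ / 4)
  have := hT_fin.fintype
  set U : T → Set (EuclideanSpace ℝ (Fin N)) := fun t => ball (t : _) (δ / 4) ∩ Ωnl
  have hU_open : ∀ t, IsOpen (U t) := fun t => isOpen_ball.inter hΩnl_open
  have hU_ne : ∀ t, (U t).Nonempty := fun t => ⟨t, mem_ball_self (by positivity), hTΩ t.2⟩
  have : Nonempty T := by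
    obtain ⟨t, -⟩ := Set.mem_iUnion.1 (hU_cover.symm ▸ hx₀ : x₀ ∈ ⋃ t, U t)
    exact ⟨t⟩
  have hG := hΩnl_conn.proximityGraph_connected hδ hU_open hU_ne hU_cover
  have hJ_near : ∀ s t, (s = t ∨ (proximityGraph δ U).Adj s t) →
      ∀ x ∈ U s, ∀ y ∈ U t, c ≤ J (x - y) := fun s t hst x hx y hy => hJc _ <| by
    rw [← dist_eq_norm]
    linarith [dist_lt_of_eq_or_proximityGraph_adj hδ.le (fun t => Set.inter_subset_left) hst hx hy]
  have hU_pos : ∀ t, volume.restrict Ωnl (U t) ≠ 0 := fun t => by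
    rw [Measure.restrict_apply (hU_open t).measurableSet,
      Set.inter_eq_left.2 Set.inter_subset_right]
    exact (hU_open t).measure_ne_zero volume (hU_ne t)
  exact exists_integral_sq_le_mul_nonlocalEnergy_of_cover
    (hJ_int.aestronglyMeasurable.comp_sub_prod_restrict Ωnl) (fun _ _ => hJ_nonneg _)
    (fun _ _ => hM _) hc (fun t => (hU_open t).measurableSet)
    hU_pos
    (ae_restrict_of_forall_mem hΩnl_open.measurableSet fun x hx =>
      Set.mem_iUnion.1 (hU_cover.symm ▸ hx))
    hG hJ_near

/-- Nonlocal Poincaré inequality for mean-zero functions on a bounded open `δ`-connected set. -/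
theorem nonlocal_poincare_mean_zero {N : ℕ} (δ : ℝ) (hδ : 0 < δ)
    (Ωnl : Set (EuclideanSpace ℝ (Fin N)))
    (hΩnl_open : IsOpen Ωnl) (hΩnl_bdd : Bornology.IsBounded Ωnl)
    (hΩnl_conn : DeltaConnected δ Ωnl)
    (J : EuclideanSpace ℝ (Fin N) → ℝ)
    (hJ_nonneg : ∀ z, 0 ≤ J z)
    (hJ_symm : ∀ z, J (-z) = J z)
    (hJ_bdd : ∃ M : ℝ, ∀ z, J z ≤ M)
    (hJ_int : Integrable J)
    (hJ1 : ∃ c > (0 : ℝ), ∀ z, ‖z‖ ≤ 2 * δ → c ≤ J z)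
    (hJ2 : ∃ K : Lp ℝ 2 (volume.restrict Ωnl) →L[ℝ] Lp ℝ 2 (volume.restrict Ωnl),
      IsCompactOperator K ∧ ∀ w : Lp ℝ 2 (volume.restrict Ωnl),
        ∀ᵐ x ∂(volume.restrict Ωnl), K w x = ∫ y in Ωnl, J (x - y) * w y) :
    ∃ C > (0 : ℝ), ∀ v : EuclideanSpace ℝ (Fin N) → ℝ,
      MemLp v 2 (volume.restrict Ωnl) → (∫ x in Ωnl, v x = 0) →
      ∫ x in Ωnl, (v x) ^ 2 ≤
        C * ∫ x in Ωnl, ∫ y in Ωnl, J (x - y) * (v y - v x) ^ 2 :=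
  nonlocal_poincare_mean_zero_general δ hδ Ωnl hΩnl_open hΩnl_bdd hΩnl_conn J hJ_nonneg hJ_bdd
    hJ_int hJ1
end

section
/- Let Ω_ℓ and Ω_{nℓ} be disjoint open bounded subsets of ℝ^N with Ω_{nℓ} δ-connected and dist(Ω_ℓ, Ω_{nℓ}) < δ (condition (P1)), and let J satisfy (J1) and (J2). Then there exists a constant C > 0, depending only on Ω_ℓ, Ω_{nℓ} and J, such that whenever f ∈ L²(Ω_{nℓ}), u ∈ L²(Ω_ℓ) and v ∈ L²(Ω_{nℓ}) solves the nonlocal problem with data (f, u), one has ‖v‖_{L²(Ω_{nℓ})} ≤ C ( ‖f‖_{L²(Ω_{nℓ})} + ‖u‖_{L²(Ω_ℓ)} ). -/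
open MeasureTheory Metric

/-!
With `a(x) = ∫_{Ωnlᶜ} J(x - y) dy + 2 ∫_{Ωnl} J(x - y) dy ≥ ∫ J > 0`, the equation reads
`a v = f + G u + 2 K v`, where `G u(x) = ∫_{Ωnlᶜ} J(x - y) ū(y) dy` is bounded from `L²(Ωl)` to
`L²(Ωnl)`. Dividing by `a`, this is `(T - 1) v = -(f + G u) / a` with `T = 2 a⁻¹ K` compact, so by
the Fredholm alternative the bound follows once `1` is not an eigenvalue of `T`.

If `a v = 2 K v`, testing against `v` and symmetrising in `x, y` gives
`∫ λ v² + ∫∫ J(x - y) (v(x) - v(y))² = 0` with `λ(x) = ∫_{Ωnlᶜ} J(x - y) dy`. As `J > 0` on the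
ball of radius `2δ`, `v` is a.e. constant at scale `2δ`, and it vanishes near the point of `Ωnl`
that is `δ`-close to `Ωl`, where `λ > 0`. The set of points near which `v` vanishes is closed under
steps of length `< δ` inside `Ωnl`, so by `δ`-connectedness it is all of `Ωnl`.
-/

open Set Topology
open scoped ENNReal

variable {E : Type*} [NormedAddCommGroup E] [InnerProductSpace ℝ E] [FiniteDimensional ℝ E]
  [MeasurableSpace E] [BorelSpace E]

section Kernel

variable {J : E → ℝ} {s : Set E} {M : ℝ}

noncomputable def kernelIntegral (J : E → ℝ) (s : Set E) (h : E → ℝ) (x : E) : ℝ :=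
  ∫ y in s, J (x - y) * h y

noncomputable def kernelMass (J : E → ℝ) (s : Set E) (x : E) : ℝ := ∫ y in s, J (x - y)

lemma kernelMass_nonneg (hJ : ∀ z, 0 ≤ J z) (x : E) : 0 ≤ kernelMass J s x :=
  integral_nonneg fun _ => hJ _

lemma kernelMass_le_integral (hJi : Integrable J) (hJ : ∀ z, 0 ≤ J z) (x : E) :
    kernelMass J s x ≤ ∫ z, J z := by
  have := setIntegral_le_integral (s := s) (hJi.comp_sub_left x) (ae_of_all _ fun y => hJ (x - y))
  rwa [integral_sub_left_eq_self J volume x] at this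

lemma kernelMass_add_kernelMass_compl (hs : MeasurableSet s) (hJi : Integrable J) (x : E) :
    kernelMass J s x + kernelMass J sᶜ x = ∫ z, J z := by
  rw [kernelMass, kernelMass, integral_add_compl hs (hJi.comp_sub_left x),
    integral_sub_left_eq_self]

lemma kernelIntegral_one : kernelIntegral J s 1 = kernelMass J s := by
  ext x
  simp [kernelIntegral, kernelMass]

lemma aestronglyMeasurable_comp_sub_prod (hJ : AEStronglyMeasurable J) (s t : Set E) :
    AEStronglyMeasurable (fun z : E × E => J (z.1 - z.2))
      ((volume.restrict s).prod (volume.restrict t)) := by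
  have := (hJ.comp_quasiMeasurePreserving (quasiMeasurePreserving_sub volume volume)).restrict
    (s := s ×ˢ t)
  rwa [← Measure.prod_restrict] at this

lemma aestronglyMeasurable_kernelIntegral (hJ : AEStronglyMeasurable J) {h : E → ℝ}
    (hh : AEStronglyMeasurable h (volume.restrict s)) :
    AEStronglyMeasurable (kernelIntegral J s h) := by
  have hJsub := aestronglyMeasurable_comp_sub_prod hJ univ s
  rw [Measure.restrict_univ] at hJsub
  exact (hJsub.mul (hh.comp_quasiMeasurePreserving
    Measure.quasiMeasurePreserving_snd)).integral_prod_right'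

lemma aestronglyMeasurable_kernelMass (hJ : AEStronglyMeasurable J) :
    AEStronglyMeasurable (kernelMass J s) :=
  kernelIntegral_one (J := J) ▸ aestronglyMeasurable_kernelIntegral hJ aestronglyMeasurable_const

lemma integrableOn_kernel_mul (hJ : AEStronglyMeasurable J) (hJb : ∀ z, ‖J z‖ ≤ M)
    {h : E → ℝ} (hh : IntegrableOn h s) (x : E) :
    IntegrableOn (fun y => J (x - y) * h y) s :=
  hh.bdd_mul (hJ.comp_quasiMeasurePreserving (quasiMeasurePreserving_sub_left volume x)).restrict
    (ae_of_all _ fun y => hJb (x - y))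

lemma norm_kernelIntegral_le (hJ : AEStronglyMeasurable J) (hJb : ∀ z, ‖J z‖ ≤ M)
    {h : E → ℝ} (hh : IntegrableOn h s) (x : E) :
    ‖kernelIntegral J s h x‖ ≤ M * ∫ y in s, ‖h y‖ := by
  rw [← integral_const_mul]
  refine (norm_integral_le_integral_norm _).trans (integral_mono
    (integrableOn_kernel_mul hJ hJb hh x).norm (hh.norm.const_mul M) fun y => ?_)
  rw [norm_mul]
  exact mul_le_mul_of_nonneg_right (hJb _) (norm_nonneg _)

end Kernel

section Coefficient

variable {J : E → ℝ} {Ω : Set E} {M : ℝ}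

noncomputable def nonlocalCoeff (J : E → ℝ) (Ω : Set E) (x : E) : ℝ :=
  kernelMass J Ωᶜ x + 2 * kernelMass J Ω x

lemma integral_le_nonlocalCoeff (hΩ : MeasurableSet Ω) (hJi : Integrable J)
    (hJ : ∀ z, 0 ≤ J z) (x : E) : ∫ z, J z ≤ nonlocalCoeff J Ω x := by
  have hsum := kernelMass_add_kernelMass_compl hΩ hJi x
  have hΩx := kernelMass_nonneg (s := Ω) hJ x
  unfold nonlocalCoeff
  linarith

lemma aestronglyMeasurable_nonlocalCoeff (hJ : AEStronglyMeasurable J) :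
    AEStronglyMeasurable (nonlocalCoeff J Ω) :=
  (aestronglyMeasurable_kernelMass hJ).add ((aestronglyMeasurable_kernelMass hJ).const_mul 2)

lemma nonlocal_operator_eq (hJi : Integrable J) (hJb : ∀ z, ‖J z‖ ≤ M) {g v : E → ℝ}
    (hg : IntegrableOn g Ωᶜ) (hv : IntegrableOn v Ω) (x : E) :
    (∫ y in Ωᶜ, J (x - y) * (g y - v x)) + 2 * ∫ y in Ω, J (x - y) * (v y - v x)
      = kernelIntegral J Ωᶜ g x + 2 * kernelIntegral J Ω v x - nonlocalCoeff J Ω x * v x := by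
  have hJx : ∀ t : Set E, IntegrableOn (fun y => J (x - y) * v x) t :=
    fun t => (hJi.comp_sub_left x).integrableOn.mul_const _
  simp_rw [mul_sub]
  rw [integral_sub (integrableOn_kernel_mul hJi.1 hJb hg x) (hJx _),
    integral_sub (integrableOn_kernel_mul hJi.1 hJb hv x) (hJx _),
    integral_mul_const, integral_mul_const]
  simp only [kernelIntegral, nonlocalCoeff, kernelMass]
  ring

end Coefficient

lemma setIntegral_pos_of_ball_subset {g : E → ℝ} {s : Set E} (hg : IntegrableOn g s)
    (hg0 : ∀ z, 0 ≤ g z) {p : E} {r : ℝ} (hr : 0 < r) (hps : ball p r ⊆ s)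
    (hpos : ∀ z ∈ ball p r, 0 < g z) : 0 < ∫ z in s, g z := by
  rw [setIntegral_pos_iff_support_of_nonneg_ae (ae_of_all _ hg0) hg]
  exact (measure_ball_pos volume p hr).trans_le
    (measure_mono fun z hz => ⟨(hpos z hz).ne', hps hz⟩)

lemma integral_pos_of_forall_norm_lt {J : E → ℝ} (hJi : Integrable J) (hJ0 : ∀ z, 0 ≤ J z)
    {r : ℝ} (hr : 0 < r) (hJpos : ∀ z, ‖z‖ < r → 0 < J z) : 0 < ∫ z, J z := by
  simpa using setIntegral_pos_of_ball_subset (s := univ) hJi.integrableOn hJ0 (p := 0) hr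
    (subset_univ _) fun z hz => hJpos z (mem_ball_zero_iff.1 hz)

section L2

lemma integral_norm_le_mul_norm {α : Type*} [MeasurableSpace α] {μ : Measure α}
    [IsFiniteMeasure μ] (u : Lp ℝ 2 μ) :
    ∫ x, ‖u x‖ ∂μ ≤ (μ univ).toReal ^ (1 / 2 : ℝ) * ‖u‖ := by
  have hu := Lp.memLp u
  have h := eLpNorm_le_eLpNorm_mul_rpow_measure_univ (μ := μ) (p := 1) (q := 2) one_le_two hu.1
  norm_num at h
  rw [integral_norm_eq_lintegral_enorm hu.1, ← eLpNorm_one_eq_lintegral_enorm, mul_comm,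
    Lp.norm_def, ENNReal.toReal_rpow, ← ENNReal.toReal_mul]
  exact ENNReal.toReal_mono (ENNReal.mul_ne_top hu.eLpNorm_ne_top (by finiteness)) h

variable {J : E → ℝ} {M : ℝ} {r s t : Set E}

lemma exists_lp_kernelIntegral_indicator_le [IsFiniteMeasure (volume.restrict r)]
    [IsFiniteMeasure (volume.restrict t)] (hr : MeasurableSet r) (hJ : AEStronglyMeasurable J)
    (hJb : ∀ z, ‖J z‖ ≤ M) :
    ∃ C ≥ 0, ∀ u : Lp ℝ 2 (volume.restrict r), ∃ g : Lp ℝ 2 (volume.restrict t),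
      g =ᵐ[volume.restrict t] kernelIntegral J s (r.indicator u) ∧ ‖g‖ ≤ C * ‖u‖ := by
  have hM : 0 ≤ M := (norm_nonneg _).trans (hJb 0)
  set Cr := (volume.restrict r univ).toReal ^ (1 / 2 : ℝ)
  set Ct := (measureUnivNNReal (volume.restrict t) : ℝ) ^ (2 : ℝ≥0∞).toReal⁻¹
  refine ⟨Ct * (M * Cr), by positivity, fun u => ?_⟩
  have hū : Integrable (r.indicator u) := (integrable_indicator_iff hr).2
    ((Lp.memLp u).integrable one_le_two)
  have hbound : ∀ x, ‖kernelIntegral J s (r.indicator u) x‖ ≤ M * (Cr * ‖u‖) := fun x =>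
    calc ‖kernelIntegral J s (r.indicator u) x‖ ≤ M * ∫ y in s, ‖r.indicator u y‖ :=
          norm_kernelIntegral_le hJ hJb hū.integrableOn x
      _ ≤ M * ∫ y, ‖r.indicator u y‖ :=
          mul_le_mul_of_nonneg_left (setIntegral_le_integral hū.norm
            (ae_of_all _ fun _ => norm_nonneg _)) hM
      _ = M * ∫ y in r, ‖u y‖ := by
          simp_rw [norm_indicator_eq_indicator_norm]
          rw [integral_indicator hr]
      _ ≤ M * (Cr * ‖u‖) := mul_le_mul_of_nonneg_left (integral_norm_le_mul_norm u) hM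
  have hg : MemLp (kernelIntegral J s (r.indicator u)) 2 (volume.restrict t) :=
    MemLp.of_bound (aestronglyMeasurable_kernelIntegral hJ
      (hū.aestronglyMeasurable.restrict)).restrict _ (ae_of_all _ hbound)
  refine ⟨hg.toLp _, hg.coeFn_toLp, ?_⟩
  calc ‖hg.toLp _‖ ≤ Ct * (M * (Cr * ‖u‖)) :=
        Lp.norm_le_of_ae_bound (by positivity) (hg.coeFn_toLp.mono fun x hx => hx ▸ hbound x)
    _ = Ct * (M * Cr) * ‖u‖ := by ring

end L2

lemma IsCompactOperator.exists_mul_left {α F : Type*} [MeasurableSpace α] {μ : Measure α}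
    {p : ℝ≥0∞} [Fact (1 ≤ p)] [NormedAddCommGroup F] [NormedSpace ℝ F]
    {K : F →L[ℝ] Lp ℝ p μ} (hK : IsCompactOperator K) {φ : α → ℝ} (hφ : MemLp φ ∞ μ) :
    ∃ T : F →L[ℝ] Lp ℝ p μ, IsCompactOperator T ∧ ∀ w, T w =ᵐ[μ] fun x => φ x * K w x := by
  let Mφ := (ContinuousLinearMap.mul ℝ ℝ).holderL μ ∞ p p (hφ.toLp φ)
  refine ⟨Mφ ∘L K, hK.clm_comp Mφ, fun w => ?_⟩
  filter_upwards [(ContinuousLinearMap.mul ℝ ℝ).coeFn_holder (r := p) (hφ.toLp φ) (K w),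
    hφ.coeFn_toLp] with x hMx hφx
  simp [Mφ, hMx, hφx]

section Energy

variable {J : E → ℝ} {M : ℝ} {s t Ω : Set E}

lemma integrable_mul_kernel_mul_prod (hJ : AEStronglyMeasurable J) (hJb : ∀ z, ‖J z‖ ≤ M)
    {g h : E → ℝ} (hg : Integrable g (volume.restrict s)) (hh : Integrable h (volume.restrict t)) :
    Integrable (fun z : E × E => g z.1 * (J (z.1 - z.2) * h z.2))
      ((volume.restrict s).prod (volume.restrict t)) := by
  have := (hg.mul_prod hh).bdd_mul (aestronglyMeasurable_comp_sub_prod hJ s t)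
    (ae_of_all _ fun z => hJb (z.1 - z.2))
  exact this.congr (ae_of_all _ fun z => by ring)

lemma integral_prod_mul_kernel_mul {g h : E → ℝ}
    (hint : Integrable (fun z : E × E => g z.1 * (J (z.1 - z.2) * h z.2))
      ((volume.restrict s).prod (volume.restrict t))) :
    ∫ z, g z.1 * (J (z.1 - z.2) * h z.2) ∂((volume.restrict s).prod (volume.restrict t))
      = ∫ x in s, g x * kernelIntegral J t h x := by
  rw [integral_prod _ hint]
  simp_rw [integral_const_mul]
  rfl

variable [IsFiniteMeasure (volume.restrict Ω)] {v : E → ℝ}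

lemma integrable_kernel_mul_sub_sq (hJ : AEStronglyMeasurable J) (hJb : ∀ z, ‖J z‖ ≤ M)
    (hv : MemLp v 2 (volume.restrict Ω)) :
    Integrable (fun z : E × E => J (z.1 - z.2) * (v z.1 - v z.2) ^ 2)
      ((volume.restrict Ω).prod (volume.restrict Ω)) := by
  have hv1 := hv.integrable one_le_two
  have hone : Integrable (1 : E → ℝ) (volume.restrict Ω) := integrable_const 1
  have h1 := integrable_mul_kernel_mul_prod hJ hJb hv.integrable_sq hone
  have h2 := integrable_mul_kernel_mul_prod hJ hJb hone hv.integrable_sq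
  have h3 := integrable_mul_kernel_mul_prod hJ hJb hv1 hv1
  exact ((h1.add h2).sub (h3.const_mul 2)).congr (ae_of_all _ fun z => by
    simp only [Pi.add_apply, Pi.sub_apply, Pi.one_apply]
    ring)

lemma integral_prod_kernel_mul_sub_sq (hJ : AEStronglyMeasurable J) (hJb : ∀ z, ‖J z‖ ≤ M)
    (hJsymm : ∀ z, J (-z) = J z) (hv : MemLp v 2 (volume.restrict Ω)) :
    ∫ z, J (z.1 - z.2) * (v z.1 - v z.2) ^ 2 ∂((volume.restrict Ω).prod (volume.restrict Ω))
      = 2 * (∫ x in Ω, kernelMass J Ω x * v x ^ 2)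
        - 2 * ∫ x in Ω, v x * kernelIntegral J Ω v x := by
  have hv1 := hv.integrable one_le_two
  have hone : Integrable (1 : E → ℝ) (volume.restrict Ω) := integrable_const 1
  have h1 := integrable_mul_kernel_mul_prod hJ hJb hv.integrable_sq hone
  have h2 := integrable_mul_kernel_mul_prod hJ hJb hone hv.integrable_sq
  have h3 := integrable_mul_kernel_mul_prod hJ hJb hv1 hv1
  have hswap : ∫ z, (1 : E → ℝ) z.1 * (J (z.1 - z.2) * v z.2 ^ 2)
        ∂((volume.restrict Ω).prod (volume.restrict Ω))
      = ∫ z, v z.1 ^ 2 * (J (z.1 - z.2) * (1 : E → ℝ) z.2)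
        ∂((volume.restrict Ω).prod (volume.restrict Ω)) := by
    rw [← integral_prod_swap]
    congr 1 with z
    simp only [Prod.fst_swap, Prod.snd_swap, Pi.one_apply]
    rw [← hJsymm, neg_sub]
    ring
  calc ∫ z, J (z.1 - z.2) * (v z.1 - v z.2) ^ 2 ∂((volume.restrict Ω).prod (volume.restrict Ω))
      = ∫ z, (v z.1 ^ 2 * (J (z.1 - z.2) * (1 : E → ℝ) z.2)
          + (1 : E → ℝ) z.1 * (J (z.1 - z.2) * v z.2 ^ 2))
          - 2 * (v z.1 * (J (z.1 - z.2) * v z.2))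
          ∂((volume.restrict Ω).prod (volume.restrict Ω)) := by
        congr 1 with z
        simp only [Pi.one_apply]
        ring
    _ = 2 * (∫ x in Ω, v x ^ 2 * kernelIntegral J Ω 1 x)
        - 2 * ∫ x in Ω, v x * kernelIntegral J Ω v x := by
        rw [integral_sub ?_ (h3.const_mul 2), integral_add h1 h2, integral_const_mul, hswap,
          integral_prod_mul_kernel_mul (g := fun x => v x ^ 2) (h := 1) h1,
          integral_prod_mul_kernel_mul (g := v) (h := v) h3]
        · ring
        · exact h1.add h2
    _ = _ := by simp_rw [kernelIntegral_one, mul_comm (v _ ^ 2)]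

lemma energy_terms_eq_zero_of_nonlocalCoeff_mul_eq (hJi : Integrable J)
    (hJ0 : ∀ z, 0 ≤ J z) (hJb : ∀ z, ‖J z‖ ≤ M) (hJsymm : ∀ z, J (-z) = J z)
    (hv : MemLp v 2 (volume.restrict Ω))
    (hid : ∀ᵐ x ∂(volume.restrict Ω), nonlocalCoeff J Ω x * v x = 2 * kernelIntegral J Ω v x) :
    (∀ᵐ x ∂(volume.restrict Ω), kernelMass J Ωᶜ x * v x ^ 2 = 0) ∧
      ∀ᵐ z ∂((volume.restrict Ω).prod (volume.restrict Ω)),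
        J (z.1 - z.2) * (v z.1 - v z.2) ^ 2 = 0 := by
  have hmass : ∀ s : Set E, Integrable (fun x => kernelMass J s x * v x ^ 2) (volume.restrict Ω) :=
    fun s => hv.integrable_sq.bdd_mul (aestronglyMeasurable_kernelMass hJi.1).restrict
      (ae_of_all _ fun x => (Real.norm_of_nonneg (kernelMass_nonneg hJ0 x)).trans_le
        (kernelMass_le_integral hJi hJ0 x))
  have hsplit : ∫ x in Ω, nonlocalCoeff J Ω x * v x ^ 2
      = (∫ x in Ω, kernelMass J Ωᶜ x * v x ^ 2) + 2 * ∫ x in Ω, kernelMass J Ω x * v x ^ 2 := by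
    rw [← integral_const_mul, ← integral_add (hmass _) ((hmass _).const_mul 2)]
    congr 1 with x
    unfold nonlocalCoeff
    ring
  have hweak : ∫ x in Ω, nonlocalCoeff J Ω x * v x ^ 2
      = 2 * ∫ x in Ω, v x * kernelIntegral J Ω v x := by
    rw [← integral_const_mul]
    refine integral_congr_ae (hid.mono fun x hx => ?_)
    dsimp only
    rw [sq, ← mul_assoc, hx]
    ring
  have hlam : 0 ≤ ∫ x in Ω, kernelMass J Ωᶜ x * v x ^ 2 :=
    integral_nonneg fun x => mul_nonneg (kernelMass_nonneg hJ0 x) (sq_nonneg _)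
  have henergy : 0 ≤ ∫ z, J (z.1 - z.2) * (v z.1 - v z.2) ^ 2
      ∂((volume.restrict Ω).prod (volume.restrict Ω)) :=
    integral_nonneg fun z => mul_nonneg (hJ0 _) (sq_nonneg _)
  have hidentity := integral_prod_kernel_mul_sub_sq hJi.1 hJb hJsymm hv
  constructor
  · exact (integral_eq_zero_iff_of_nonneg (fun x => mul_nonneg (kernelMass_nonneg hJ0 x)
      (sq_nonneg _)) (hmass _)).1 (by linarith)
  · exact (integral_eq_zero_iff_of_nonneg (fun z => mul_nonneg (hJ0 _) (sq_nonneg _))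
      (integrable_kernel_mul_sub_sq hJi.1 hJb hv)).1 (by linarith)

end Energy

lemma isOpen_of_forall_dist_lt {X : Type*} [PseudoMetricSpace X] {D B : Set X} {δ : ℝ}
    (hD : IsOpen D) (hδ : 0 < δ) (hBD : B ⊆ D)
    (hnear : ∀ x ∈ B, ∀ y ∈ D, dist x y < δ → y ∈ B) : IsOpen B := by
  refine Metric.isOpen_iff.2 fun x hx => ?_
  obtain ⟨ρ, hρ, hρD⟩ := Metric.isOpen_iff.1 hD x (hBD hx)
  refine ⟨min ρ δ, lt_min hρ hδ, fun y hy => hnear x hx y ?_ ?_⟩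
  · exact hρD (ball_subset_ball (min_le_left _ _) hy)
  · rw [dist_comm]
    exact (mem_ball.1 hy).trans_le (min_le_right _ _)

lemma DeltaConnected.subset_of_forall_dist_lt {N : ℕ} {δ : ℝ}
    {D A : Set (EuclideanSpace ℝ (Fin N))} (hconn : DeltaConnected δ D) (hδ : 0 < δ)
    (hD : IsOpen D) (hAD : A ⊆ D) (hA : A.Nonempty)
    (hnear : ∀ x ∈ A, ∀ y ∈ D, dist x y < δ → y ∈ A) : D ⊆ A := by
  by_contra hDA
  have hnear' : ∀ x ∈ D \ A, ∀ y ∈ D, dist x y < δ → y ∈ D \ A :=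
    fun x hx y hy hxy => ⟨hy, fun hyA => hx.2 (hnear y hyA x hx.1 (by rwa [dist_comm]))⟩
  refine hconn ⟨A, D \ A, isOpen_of_forall_dist_lt hD hδ hAD hnear,
    isOpen_of_forall_dist_lt hD hδ sdiff_subset hnear', hA, sdiff_nonempty.2 hDA,
    union_sdiff_cancel hAD, inter_sdiff_self A D, fun x hx y hy => ?_⟩
  by_contra! hxy
  exact hy.2 (hnear x hx y hy.1 hxy)

lemma ae_restrict_of_forall_mem_nhds {X : Type*} [TopologicalSpace X] [SecondCountableTopology X]
    [MeasurableSpace X] {μ : Measure X} {s : Set X} (hs : MeasurableSet s) {P : X → Prop}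
    (h : ∀ x ∈ s, ∃ u ∈ 𝓝 x, ∀ᵐ y ∂(μ.restrict s), y ∈ u → P y) : ∀ᵐ y ∂(μ.restrict s), P y := by
  rw [ae_iff, Measure.restrict_apply' hs]
  refine measure_null_of_locally_null _ fun x ⟨_, hxs⟩ => ?_
  obtain ⟨u, hu, hP⟩ := h x hxs
  rw [ae_iff, Measure.restrict_apply' hs] at hP
  refine ⟨_, inter_mem_nhdsWithin _ hu, measure_mono_null ?_ hP⟩
  rintro y ⟨⟨hy, hys⟩, hyu⟩
  exact ⟨fun h => hy (h hyu), hys⟩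

section Propagation

variable {Ω : Set E} {v : E → ℝ} {δ : ℝ}

lemma ae_ae_eq_of_kernel_mul_sq_sub_eq_zero {J : E → ℝ} (hJpos : ∀ z, ‖z‖ < 2 * δ → 0 < J z)
    (h : ∀ᵐ z ∂((volume.restrict Ω).prod (volume.restrict Ω)),
      J (z.1 - z.2) * (v z.1 - v z.2) ^ 2 = 0) :
    ∀ᵐ x ∂(volume.restrict Ω), ∀ᵐ y ∂(volume.restrict Ω), dist x y < 2 * δ → v y = v x := by
  filter_upwards [Measure.ae_ae_of_ae_prod h] with x hx
  filter_upwards [hx] with y hy hxy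
  have hJ := hJpos (x - y) (by rwa [← dist_eq_norm])
  have := pow_eq_zero_iff two_ne_zero |>.1 ((mul_eq_zero.1 hy).resolve_left hJ.ne')
  linarith

lemma ae_eq_zero_on_ball_of_ae_eq_zero_on_ball (hΩ : IsOpen Ω) (hδ : 0 < δ)
    (hloc : ∀ᵐ x ∂(volume.restrict Ω), ∀ᵐ y ∂(volume.restrict Ω), dist x y < 2 * δ → v y = v x)
    {p : E} (hp : p ∈ Ω) {r : ℝ} (hr : 0 < r)
    (h0 : ∀ᵐ y ∂(volume.restrict Ω), y ∈ ball p r → v y = 0) :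
    ∀ᵐ y ∂(volume.restrict Ω), y ∈ ball p δ → v y = 0 := by
  obtain ⟨ρ, hρ, hρΩ⟩ := Metric.isOpen_iff.1 hΩ p hp
  set r' := min r (min ρ δ)
  have hr'Ω : ball p r' ⊆ Ω :=
    (ball_subset_ball ((min_le_right _ _).trans (min_le_left _ _))).trans hρΩ
  have hpos : volume.restrict Ω (ball p r') ≠ 0 := by
    rw [Measure.restrict_apply measurableSet_ball, inter_eq_left.2 hr'Ω]
    exact (measure_ball_pos _ _ (lt_min hr (lt_min hρ hδ))).ne'
  -- `v y` is compared with `v` at a point `z` of the small ball, where `v z = 0`.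
  filter_upwards [hloc] with y hy hyp
  obtain ⟨z, hz, hz0, hzy⟩ : ∃ z ∈ ball p r',
      (z ∈ ball p r → v z = 0) ∧ (dist y z < 2 * δ → v z = v y) := by
    by_contra hnone
    exact hpos (measure_mono_null (fun z hz hP => hnone ⟨z, hz, hP⟩) (ae_iff.1 (h0.and hy)))
  have hzr : dist z p < r' := hz
  have hyz : dist y z < 2 * δ := calc
    dist y z ≤ dist y p + dist z p := dist_triangle_right _ _ _
    _ < δ + δ := add_lt_add hyp (hzr.trans_le ((min_le_right _ _).trans (min_le_right _ _)))
    _ = 2 * δ := by ring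
  rw [← hzy hyz, hz0 (ball_subset_ball (min_le_left _ _) hz)]

end Propagation

lemma exists_ball_kernelMass_compl_pos {Ωl Ω : Set E} {δ : ℝ} (hδ : 0 < δ) (hΩl : IsOpen Ωl)
    (hdisj : Ωl ∩ Ω = ∅) (hP1 : ∃ x ∈ Ωl, ∃ y ∈ Ω, dist x y < δ) {J : E → ℝ}
    (hJi : Integrable J) (hJ0 : ∀ z, 0 ≤ J z) (hJpos : ∀ z, ‖z‖ < 2 * δ → 0 < J z) :
    ∃ p ∈ Ω, ∀ y ∈ ball p (δ / 2), 0 < kernelMass J Ωᶜ y := by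
  obtain ⟨x₀, hx₀, y₀, hy₀, hxy⟩ := hP1
  obtain ⟨r, hr, hrΩl⟩ := Metric.isOpen_iff.1 hΩl x₀ hx₀
  refine ⟨y₀, hy₀, fun y hy => setIntegral_pos_of_ball_subset (p := x₀) (r := min r (δ / 2))
    (hJi.comp_sub_left y).integrableOn (fun z => hJ0 _) (lt_min hr (half_pos hδ)) ?_ ?_⟩
  · exact fun z hz hzΩ => (eq_empty_iff_forall_notMem.1 hdisj) z
      ⟨hrΩl (ball_subset_ball (min_le_left _ _) hz), hzΩ⟩
  · intro z hz
    refine hJpos _ ?_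
    have hz' : dist z x₀ < δ / 2 := (mem_ball.1 hz).trans_le (min_le_right _ _)
    rw [← dist_eq_norm]
    calc dist y z ≤ dist y y₀ + dist y₀ x₀ + dist x₀ z := dist_triangle4 _ _ _ _
      _ < δ / 2 + δ + δ / 2 := by linarith [mem_ball.1 hy, dist_comm x₀ y₀, dist_comm x₀ z]
      _ = 2 * δ := by ring

lemma ae_eq_zero_of_deltaConnected {N : ℕ} {Ω : Set (EuclideanSpace ℝ (Fin N))} {δ : ℝ}
    (hδ : 0 < δ) (hΩ : IsOpen Ω) (hconn : DeltaConnected δ Ω) {v : EuclideanSpace ℝ (Fin N) → ℝ}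
    (hloc : ∀ᵐ x ∂(volume.restrict Ω), ∀ᵐ y ∂(volume.restrict Ω), dist x y < 2 * δ → v y = v x)
    (hseed : ∃ p ∈ Ω, ∃ r > 0, ∀ᵐ y ∂(volume.restrict Ω), y ∈ ball p r → v y = 0) :
    ∀ᵐ y ∂(volume.restrict Ω), v y = 0 := by
  obtain ⟨p, hp, r, hr, h0⟩ := hseed
  set A := {x ∈ Ω | ∀ᵐ y ∂(volume.restrict Ω), y ∈ ball x δ → v y = 0}
  have hnear : ∀ x ∈ A, ∀ y ∈ Ω, dist x y < δ → y ∈ A := by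
    rintro x ⟨-, hx⟩ y hy hxy
    refine ⟨hy, ae_eq_zero_on_ball_of_ae_eq_zero_on_ball hΩ hδ hloc hy (sub_pos.2 hxy) ?_⟩
    filter_upwards [hx] with z hz hzy
    refine hz (mem_ball.2 ?_)
    linarith [dist_triangle z y x, mem_ball.1 hzy, dist_comm x y]
  have hΩA := hconn.subset_of_forall_dist_lt hδ hΩ (sep_subset _ _)
    ⟨p, hp, ae_eq_zero_on_ball_of_ae_eq_zero_on_ball hΩ hδ hloc hp hr h0⟩ hnear
  exact ae_restrict_of_forall_mem_nhds hΩ.measurableSet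
    fun x hx => ⟨ball x δ, ball_mem_nhds x hδ, (hΩA hx).2⟩

theorem ae_eq_zero_of_nonlocalCoeff_mul_eq {N : ℕ} {δ : ℝ} (hδ : 0 < δ)
    {Ωl Ω : Set (EuclideanSpace ℝ (Fin N))} (hΩl : IsOpen Ωl) (hΩ : IsOpen Ω)
    [IsFiniteMeasure (volume.restrict Ω)] (hdisj : Ωl ∩ Ω = ∅) (hconn : DeltaConnected δ Ω)
    (hP1 : ∃ x ∈ Ωl, ∃ y ∈ Ω, dist x y < δ) {J : EuclideanSpace ℝ (Fin N) → ℝ} {M : ℝ}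
    (hJi : Integrable J) (hJ0 : ∀ z, 0 ≤ J z) (hJb : ∀ z, ‖J z‖ ≤ M)
    (hJsymm : ∀ z, J (-z) = J z) (hJpos : ∀ z, ‖z‖ < 2 * δ → 0 < J z)
    {v : EuclideanSpace ℝ (Fin N) → ℝ} (hv : MemLp v 2 (volume.restrict Ω))
    (hid : ∀ᵐ x ∂(volume.restrict Ω), nonlocalCoeff J Ω x * v x = 2 * kernelIntegral J Ω v x) :
    ∀ᵐ x ∂(volume.restrict Ω), v x = 0 := by
  obtain ⟨hexterior, hinterior⟩ :=
    energy_terms_eq_zero_of_nonlocalCoeff_mul_eq hJi hJ0 hJb hJsymm hv hid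
  obtain ⟨p, hp, hpos⟩ := exists_ball_kernelMass_compl_pos hδ hΩl hdisj hP1 hJi hJ0 hJpos
  refine ae_eq_zero_of_deltaConnected hδ hΩ hconn
    (ae_ae_eq_of_kernel_mul_sq_sub_eq_zero hJpos hinterior) ⟨p, hp, δ / 2, half_pos hδ, ?_⟩
  filter_upwards [hexterior] with y hy hyp
  exact pow_eq_zero_iff two_ne_zero |>.1 ((mul_eq_zero.1 hy).resolve_left (hpos y hyp).ne')

lemma exists_isCompactOperator_ae_eq_div_nonlocalCoeff {J : E → ℝ} {Ω : Set E}
    (hΩ : MeasurableSet Ω) (hJi : Integrable J) (hJ0 : ∀ z, 0 ≤ J z) (hα : 0 < ∫ z, J z)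
    (hK : ∃ K : Lp ℝ 2 (volume.restrict Ω) →L[ℝ] Lp ℝ 2 (volume.restrict Ω),
      IsCompactOperator K ∧ ∀ w : Lp ℝ 2 (volume.restrict Ω),
        ∀ᵐ x ∂(volume.restrict Ω), K w x = ∫ y in Ω, J (x - y) * w y) :
    ∃ T : Lp ℝ 2 (volume.restrict Ω) →L[ℝ] Lp ℝ 2 (volume.restrict Ω), IsCompactOperator T ∧
      ∀ w, T w =ᵐ[volume.restrict Ω] fun x => 2 / nonlocalCoeff J Ω x * kernelIntegral J Ω w x := by
  obtain ⟨K, hKc, hK⟩ := hK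
  have hφ : MemLp (fun x => 2 / nonlocalCoeff J Ω x) ∞ (volume.restrict Ω) := by
    refine memLp_top_of_bound ((aestronglyMeasurable_nonlocalCoeff hJi.1).aemeasurable.const_div
      2).aestronglyMeasurable.restrict (2 / ∫ z, J z) (ae_of_all _ fun x => ?_)
    have ha := integral_le_nonlocalCoeff hΩ hJi hJ0 x
    rw [norm_div, Real.norm_two, Real.norm_of_nonneg (hα.le.trans ha)]
    gcongr
  obtain ⟨T, hTc, hT⟩ := hKc.exists_mul_left hφ
  refine ⟨T, hTc, fun w => (hT w).trans ((hK w).mono fun x hx => ?_)⟩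
  dsimp only
  rw [hx]
  rfl

lemma norm_sub_le_of_nonlocalCoeff_mul_eq {J : E → ℝ} {Ω : Set E} (hΩ : MeasurableSet Ω)
    (hJi : Integrable J) (hJ0 : ∀ z, 0 ≤ J z) (hα : 0 < ∫ z, J z)
    {T : Lp ℝ 2 (volume.restrict Ω) →L[ℝ] Lp ℝ 2 (volume.restrict Ω)}
    (hT : ∀ w, T w =ᵐ[volume.restrict Ω]
      fun x => 2 / nonlocalCoeff J Ω x * kernelIntegral J Ω w x)
    {w F : Lp ℝ 2 (volume.restrict Ω)}
    (hwF : ∀ᵐ x ∂(volume.restrict Ω),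
      nonlocalCoeff J Ω x * w x = F x + 2 * kernelIntegral J Ω w x) :
    ‖T w - w‖ ≤ (∫ z, J z)⁻¹ * ‖F‖ := by
  refine Lp.norm_le_mul_norm_of_ae_le_mul ?_
  filter_upwards [hT w, hwF, Lp.coeFn_sub (T w) w] with x hTx hx hsub
  have ha := integral_le_nonlocalCoeff hΩ hJi hJ0 x
  have hax : 0 < nonlocalCoeff J Ω x := hα.trans_le ha
  have hres : 2 / nonlocalCoeff J Ω x * kernelIntegral J Ω w x - w x
      = -(F x / nonlocalCoeff J Ω x) := by
    field_simp
    linarith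
  rw [hsub, Pi.sub_apply, hTx, hres, norm_neg, norm_div, Real.norm_of_nonneg hax.le,
    div_eq_inv_mul]
  gcongr

theorem exists_norm_le_of_nonlocalCoeff_mul_eq {N : ℕ} {δ : ℝ} (hδ : 0 < δ)
    {Ωl Ω : Set (EuclideanSpace ℝ (Fin N))} (hΩl : IsOpen Ωl) (hΩ : IsOpen Ω)
    [IsFiniteMeasure (volume.restrict Ω)] (hdisj : Ωl ∩ Ω = ∅) (hconn : DeltaConnected δ Ω)
    (hP1 : ∃ x ∈ Ωl, ∃ y ∈ Ω, dist x y < δ) {J : EuclideanSpace ℝ (Fin N) → ℝ} {M : ℝ}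
    (hJi : Integrable J) (hJ0 : ∀ z, 0 ≤ J z) (hJb : ∀ z, ‖J z‖ ≤ M)
    (hJsymm : ∀ z, J (-z) = J z) (hJpos : ∀ z, ‖z‖ < 2 * δ → 0 < J z)
    (hK : ∃ K : Lp ℝ 2 (volume.restrict Ω) →L[ℝ] Lp ℝ 2 (volume.restrict Ω),
      IsCompactOperator K ∧ ∀ w : Lp ℝ 2 (volume.restrict Ω),
        ∀ᵐ x ∂(volume.restrict Ω), K w x = ∫ y in Ω, J (x - y) * w y) :
    ∃ C > 0, ∀ w F : Lp ℝ 2 (volume.restrict Ω),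
      (∀ᵐ x ∂(volume.restrict Ω), nonlocalCoeff J Ω x * w x = F x + 2 * kernelIntegral J Ω w x) →
      ‖w‖ ≤ C * ‖F‖ := by
  set α := ∫ z, J z
  have hα : 0 < α := integral_pos_of_forall_norm_lt hJi hJ0 (by positivity) hJpos
  obtain ⟨T, hTc, hT⟩ :=
    exists_isCompactOperator_ae_eq_div_nonlocalCoeff hΩ.measurableSet hJi hJ0 hα hK
  have hnot : ¬ Module.End.HasEigenvalue
      (T : Lp ℝ 2 (volume.restrict Ω) →ₗ[ℝ] Lp ℝ 2 (volume.restrict Ω)) 1 := by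
    intro h
    obtain ⟨w, hw⟩ := h.exists_hasEigenvector
    have hTw : T w = w := by simpa using hw.apply_eq_smul
    refine hw.2 (Lp.eq_zero_iff_ae_eq_zero.2 (ae_eq_zero_of_nonlocalCoeff_mul_eq hδ hΩl hΩ hdisj
      hconn hP1 hJi hJ0 hJb hJsymm hJpos (Lp.memLp w) ?_))
    filter_upwards [hTw ▸ hT w] with x hx
    have hax : nonlocalCoeff J Ω x ≠ 0 :=
      (hα.trans_le (integral_le_nonlocalCoeff hΩ.measurableSet hJi hJ0 x)).ne'
    rw [hx]
    field_simp
  obtain ⟨C, hC⟩ := hTc.antilipschitz_of_not_hasEigenvalue one_ne_zero hnot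
  refine ⟨(C + 1) * α⁻¹, by positivity, fun w F hwF => ?_⟩
  have hTw : (T - (1 : ℝ) • 1) w = T w - w := by simp
  calc ‖w‖ ≤ C * ‖T w - w‖ := hTw ▸ hC.le_mul_norm (map_zero _) w
    _ ≤ C * (α⁻¹ * ‖F‖) := by
      gcongr
      exact norm_sub_le_of_nonlocalCoeff_mul_eq hΩ.measurableSet hJi hJ0 hα hT hwF
    _ ≤ (C + 1) * α⁻¹ * ‖F‖ := by
      rw [← mul_assoc]
      gcongr
      linarith

/-- A priori `L²` bound for solutions of the nonlocal problem with data `(f, u)`: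
`‖v‖_{L²(Ω_{nℓ})} ≤ C (‖f‖_{L²(Ω_{nℓ})} + ‖u‖_{L²(Ω_ℓ)})`. -/
theorem nonlocal_problem_apriori_bound {N : ℕ} (δ : ℝ) (hδ : 0 < δ)
    (Ωl Ωnl : Set (EuclideanSpace ℝ (Fin N)))
    (hΩl_open : IsOpen Ωl) (hΩl_bdd : Bornology.IsBounded Ωl)
    (hΩnl_open : IsOpen Ωnl) (hΩnl_bdd : Bornology.IsBounded Ωnl)
    (hdisj : Ωl ∩ Ωnl = ∅)
    (hΩnl_conn : DeltaConnected δ Ωnl)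
    (hP1 : ∃ x ∈ Ωl, ∃ y ∈ Ωnl, dist x y < δ)
    (J : EuclideanSpace ℝ (Fin N) → ℝ)
    (hJ_nonneg : ∀ z, 0 ≤ J z)
    (hJ_symm : ∀ z, J (-z) = J z)
    (hJ_bdd : ∃ M : ℝ, ∀ z, J z ≤ M)
    (hJ_int : Integrable J)
    (hJ1 : ∃ c > (0 : ℝ), ∀ z, ‖z‖ ≤ 2 * δ → c ≤ J z)
    (hJ2 : ∃ K : Lp ℝ 2 (volume.restrict Ωnl) →L[ℝ] Lp ℝ 2 (volume.restrict Ωnl),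
      IsCompactOperator K ∧ ∀ w : Lp ℝ 2 (volume.restrict Ωnl),
        ∀ᵐ x ∂(volume.restrict Ωnl), K w x = ∫ y in Ωnl, J (x - y) * w y) :
    ∃ C > (0 : ℝ),
      ∀ (f : Lp ℝ 2 (volume.restrict Ωnl)) (u : Lp ℝ 2 (volume.restrict Ωl))
        (v : Lp ℝ 2 (volume.restrict Ωnl)),
        (∀ᵐ x ∂(volume.restrict Ωnl),
          -f x = (∫ y in Ωnlᶜ, J (x - y) * (Set.indicator Ωl u y - v x)) +
            2 * ∫ y in Ωnl, J (x - y) * (v y - v x)) →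
        ‖v‖ ≤ C * (‖f‖ + ‖u‖) := by
  obtain ⟨M, hM⟩ := hJ_bdd
  obtain ⟨c, hc, hJc⟩ := hJ1
  have hJb : ∀ z, ‖J z‖ ≤ M := fun z => (Real.norm_of_nonneg (hJ_nonneg z)).trans_le (hM z)
  have hJpos : ∀ z, ‖z‖ < 2 * δ → 0 < J z := fun z hz => hc.trans_le (hJc z hz.le)
  have : IsFiniteMeasure (volume.restrict Ωl) :=
    isFiniteMeasure_restrict.2 hΩl_bdd.measure_lt_top.ne
  have : IsFiniteMeasure (volume.restrict Ωnl) :=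
    isFiniteMeasure_restrict.2 hΩnl_bdd.measure_lt_top.ne
  obtain ⟨C, hC, hCbound⟩ := exists_norm_le_of_nonlocalCoeff_mul_eq hδ hΩl_open hΩnl_open hdisj
    hΩnl_conn hP1 hJ_int hJ_nonneg hJb hJ_symm hJpos hJ2
  obtain ⟨CG, hCG, hG⟩ := exists_lp_kernelIntegral_indicator_le (s := Ωnlᶜ) (t := Ωnl)
    hΩl_open.measurableSet hJ_int.1 hJb
  refine ⟨C * (1 + CG), by positivity, fun f u v hsol => ?_⟩
  obtain ⟨g, hg, hgu⟩ := hG u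
  have hū : Integrable (Ωl.indicator u) :=
    (integrable_indicator_iff hΩl_open.measurableSet).2 ((Lp.memLp u).integrable one_le_two)
  have hv : ∀ᵐ x ∂(volume.restrict Ωnl),
      nonlocalCoeff J Ωnl x * v x = (f + g) x + 2 * kernelIntegral J Ωnl v x := by
    filter_upwards [hsol, hg, Lp.coeFn_add f g] with x hx hgx hfg
    rw [nonlocal_operator_eq hJ_int hJb hū.integrableOn ((Lp.memLp v).integrable one_le_two) x]
      at hx
    rw [hfg, Pi.add_apply, hgx]
    linarith
  calc ‖v‖ ≤ C * (‖f‖ + CG * ‖u‖) :=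
        (hCbound v (f + g) hv).trans (by gcongr; exact (norm_add_le f g).trans (by gcongr))
    _ ≤ C * (1 + CG) * (‖f‖ + ‖u‖) := by
      nlinarith [mul_nonneg hC.le (add_nonneg (mul_nonneg hCG (norm_nonneg f)) (norm_nonneg u))]
end

section
/- Let Ω_ℓ and Ω_{nℓ} be disjoint open bounded subsets of ℝ^N with Ω_{nℓ} δ-connected and dist(Ω_ℓ, Ω_{nℓ}) < δ (condition (P1)), and let J satisfy (J1) and (J2). Fix u ∈ L²(Ω_ℓ) and f ∈ L²(Ω_{nℓ}). If v̲ ∈ L²(Ω_{nℓ}) is a subsolution of the nonlocal problem with data (f, u) and v ∈ L²(Ω_{nℓ}) is a solution of the nonlocal problem with the same data (f, u), then v̲(x) ≤ v(x) for almost every x ∈ Ω_{nℓ}. -/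
open MeasureTheory Metric

/-!
Put `w = vsub - v` and `p = w⁺`. Subtracting the two relations gives
`a x * w x ≤ ∫_{Ωnl} J (x - y) * (w y - w x)` with `a x = (∫_{Ωnlᶜ} J (x - y)) / 2`.
Testing against `p` and symmetrising in `(x, y)` gives
`∫ a p² + ½ ∬ J (x - y) (p y - p x)² ≤ 0`, because `(w y - w x)(p y - p x) ≥ (p y - p x)²`.
So `p` takes equal values a.e. on pairs at distance `< 2δ` (where `J ≥ c > 0`), and vanishes near
a point of `Ωnl` within `δ` of `Ωl` (where `a > 0`); `δ`-connectedness of `Ωnl` spreads `p = 0`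
over all of `Ωnl`.
-/

open Set Filter Function

theorem sq_max_zero_sub_le (a b : ℝ) :
    (max b 0 - max a 0) ^ 2 ≤ (b - a) * (max b 0 - max a 0) := by
  rcases le_total a 0 with ha | ha <;> rcases le_total b 0 with hb | hb <;>
    simp only [max_eq_left, max_eq_right, ha, hb] <;> nlinarith

theorem max_zero_mul_self (a : ℝ) : max a 0 * a = max a 0 ^ 2 := by
  rcases le_total a 0 with h | h <;> simp [h, sq]

section Energy

variable {α : Type*} [MeasurableSpace α] {μ : Measure α} {k : α → α → ℝ} {M : ℝ} {g h : α → ℝ}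

theorem MeasureTheory.MemLp.comp_snd_sub_comp_fst [IsFiniteMeasure μ] (hg : MemLp g 2 μ) :
    MemLp (fun q : α × α => g q.2 - g q.1) 2 (μ.prod μ) :=
  (hg.comp_snd μ).sub (hg.comp_fst μ)

theorem integrable_kernel_mul_sub_mul [IsFiniteMeasure μ]
    (hk_meas : AEStronglyMeasurable (uncurry k) (μ.prod μ)) (hk_bdd : ∀ x y, |k x y| ≤ M)
    (hg : MemLp g 2 μ) {H : α × α → ℝ} (hH : MemLp H 2 (μ.prod μ)) :
    Integrable (fun q : α × α => k q.1 q.2 * ((g q.2 - g q.1) * H q)) (μ.prod μ) :=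
  (hg.comp_snd_sub_comp_fst.integrable_mul hH).bdd_mul hk_meas
    (ae_of_all _ fun q => hk_bdd q.1 q.2)

theorem mul_integral_kernel_eq (x : α) :
    h x * ∫ y, k x y * (g y - g x) ∂μ = ∫ y, k x y * ((g y - g x) * h x) ∂μ := by
  rw [← integral_const_mul]
  congr 1 with y
  ring

theorem integrable_mul_integral_kernel [IsFiniteMeasure μ]
    (hk_meas : AEStronglyMeasurable (uncurry k) (μ.prod μ)) (hk_bdd : ∀ x y, |k x y| ≤ M)
    (hg : MemLp g 2 μ) (hh : MemLp h 2 μ) :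
    Integrable (fun x => h x * ∫ y, k x y * (g y - g x) ∂μ) μ := by
  simp_rw [mul_integral_kernel_eq]
  exact (integrable_kernel_mul_sub_mul hk_meas hk_bdd hg (hh.comp_fst μ)).integral_prod_left

theorem integral_mul_integral_kernel [IsFiniteMeasure μ]
    (hk_meas : AEStronglyMeasurable (uncurry k) (μ.prod μ)) (hk_bdd : ∀ x y, |k x y| ≤ M)
    (hk_symm : ∀ x y, k y x = k x y)
    (hg : MemLp g 2 μ) (hh : MemLp h 2 μ) :
    ∫ x, h x * ∫ y, k x y * (g y - g x) ∂μ ∂μ =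
      -(∫ q, k q.1 q.2 * ((g q.2 - g q.1) * (h q.2 - h q.1)) ∂μ.prod μ) / 2 := by
  have hF₁ := integrable_kernel_mul_sub_mul hk_meas hk_bdd hg (hh.comp_fst μ)
  have hF₃ := integrable_kernel_mul_sub_mul hk_meas hk_bdd hg hh.comp_snd_sub_comp_fst
  have hswap : ∫ q, k q.1 q.2 * ((g q.2 - g q.1) * h q.1) ∂μ.prod μ =
      -∫ q, k q.1 q.2 * ((g q.2 - g q.1) * h q.2) ∂μ.prod μ := by
    rw [← integral_prod_swap, ← integral_neg]
    congr 1 with q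
    simp only [Prod.fst_swap, Prod.snd_swap, hk_symm]
    ring
  have hsplit : ∫ q, k q.1 q.2 * ((g q.2 - g q.1) * h q.2) ∂μ.prod μ =
      ∫ q, k q.1 q.2 * ((g q.2 - g q.1) * (h q.2 - h q.1)) ∂μ.prod μ +
        ∫ q, k q.1 q.2 * ((g q.2 - g q.1) * h q.1) ∂μ.prod μ := by
    rw [← integral_add hF₃ hF₁]
    congr 1 with q
    ring
  simp_rw [mul_integral_kernel_eq]
  rw [← integral_prod _ hF₁]
  linarith

theorem posPart_energy_eq_zero_of_le_integral_kernel [IsFiniteMeasure μ]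
    (hk_meas : AEStronglyMeasurable (uncurry k) (μ.prod μ)) (hk_nonneg : ∀ x y, 0 ≤ k x y)
    (hk_le : ∀ x y, k x y ≤ M) (hk_symm : ∀ x y, k y x = k x y) {a w : α → ℝ}
    (ha_meas : AEStronglyMeasurable a μ) (ha_nonneg : ∀ x, 0 ≤ a x) (hw : MemLp w 2 μ)
    (h : ∀ᵐ x ∂μ, a x * w x ≤ ∫ y, k x y * (w y - w x) ∂μ) :
    (fun x => a x * max (w x) 0 ^ 2) =ᵐ[μ] 0 ∧
      (fun q : α × α => k q.1 q.2 * (max (w q.2) 0 - max (w q.1) 0) ^ 2) =ᵐ[μ.prod μ] 0 := by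
  set p := fun x => max (w x) 0
  have hp : MemLp p 2 μ := hw.pos_part
  have hk_bdd : ∀ x y, |k x y| ≤ M := fun x y =>
    (abs_of_nonneg (hk_nonneg x y)).trans_le (hk_le x y)
  have hpI := integrable_mul_integral_kernel hk_meas hk_bdd hw hp
  have hF₃ := integrable_kernel_mul_sub_mul hk_meas hk_bdd hw hp.comp_snd_sub_comp_fst
  have hap_nonneg : ∀ x, 0 ≤ a x * p x ^ 2 := fun x => mul_nonneg (ha_nonneg x) (sq_nonneg _)
  have hF₄_nonneg : ∀ q : α × α, 0 ≤ k q.1 q.2 * (p q.2 - p q.1) ^ 2 :=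
    fun q => mul_nonneg (hk_nonneg _ _) (sq_nonneg _)
  have hap_le : ∀ᵐ x ∂μ, a x * p x ^ 2 ≤ p x * ∫ y, k x y * (w y - w x) ∂μ := by
    filter_upwards [h] with x hx
    rw [← max_zero_mul_self, mul_left_comm]
    exact mul_le_mul_of_nonneg_left hx (le_max_right _ _)
  have hF₄_le : ∀ q : α × α,
      k q.1 q.2 * (p q.2 - p q.1) ^ 2 ≤ k q.1 q.2 * ((w q.2 - w q.1) * (p q.2 - p q.1)) :=
    fun q => mul_le_mul_of_nonneg_left (sq_max_zero_sub_le _ _) (hk_nonneg _ _)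
  have hap : Integrable (fun x => a x * p x ^ 2) μ :=
    hpI.mono' (ha_meas.mul (hp.1.pow 2)) <| by
      filter_upwards [hap_le] with x hx
      rwa [Real.norm_of_nonneg (hap_nonneg x)]
  have hF₄ : Integrable (fun q : α × α => k q.1 q.2 * (p q.2 - p q.1) ^ 2) (μ.prod μ) :=
    hF₃.mono' (hk_meas.mul ((hp.1.comp_snd.sub hp.1.comp_fst).pow 2)) <|
      ae_of_all _ fun q => by rw [Real.norm_of_nonneg (hF₄_nonneg q)]; exact hF₄_le q
  have henergy : ∫ x, a x * p x ^ 2 ∂μ +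
      (∫ q, k q.1 q.2 * (p q.2 - p q.1) ^ 2 ∂μ.prod μ) / 2 ≤ 0 := by
    have h₁ := integral_mono_ae hap hpI hap_le
    have h₂ := integral_mono hF₄ hF₃ hF₄_le
    rw [integral_mul_integral_kernel hk_meas hk_bdd hk_symm hw hp] at h₁
    linarith
  have h₁ : 0 ≤ ∫ x, a x * p x ^ 2 ∂μ := integral_nonneg hap_nonneg
  have h₂ : 0 ≤ ∫ q, k q.1 q.2 * (p q.2 - p q.1) ^ 2 ∂μ.prod μ := integral_nonneg hF₄_nonneg
  exact ⟨(integral_eq_zero_iff_of_nonneg hap_nonneg hap).1 (by linarith),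
    (integral_eq_zero_iff_of_nonneg hF₄_nonneg hF₄).1 (by linarith)⟩

end Energy

theorem integral_mul_sub_const {α : Type*} [MeasurableSpace α] {μ : Measure α} {K g : α → ℝ}
    (hK : Integrable K μ) (hKg : Integrable (fun y => K y * g y) μ) (c : ℝ) :
    ∫ y, K y * (g y - c) ∂μ = ∫ y, K y * g y ∂μ - c * ∫ y, K y ∂μ := by
  rw [← integral_const_mul, ← integral_sub hKg (hK.const_mul c)]
  congr 1 with y
  ring

theorem half_integral_mul_sub_le_of_le_of_eq {α : Type*} [MeasurableSpace α] {ν μ : Measure α}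
    {K ū g₁ g₂ : α → ℝ} {F c₁ c₂ : ℝ} (hKν : Integrable K ν)
    (hKū : Integrable (fun y => K y * ū y) ν) (hKμ : Integrable K μ)
    (hKg₁ : Integrable (fun y => K y * g₁ y) μ) (hKg₂ : Integrable (fun y => K y * g₂ y) μ)
    (hsub : F ≤ ∫ y, K y * (ū y - c₁) ∂ν + 2 * ∫ y, K y * (g₁ y - c₁) ∂μ)
    (hsol : F = ∫ y, K y * (ū y - c₂) ∂ν + 2 * ∫ y, K y * (g₂ y - c₂) ∂μ) :
    (∫ y, K y ∂ν) / 2 * (c₁ - c₂) ≤ ∫ y, K y * (g₁ y - g₂ y - (c₁ - c₂)) ∂μ := by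
  have hKg : Integrable (fun y => K y * (g₁ y - g₂ y)) μ := by
    simp only [mul_sub]
    exact hKg₁.sub hKg₂
  have hdiff : ∫ y, K y * (g₁ y - g₂ y) ∂μ = ∫ y, K y * g₁ y ∂μ - ∫ y, K y * g₂ y ∂μ := by
    simp only [mul_sub]
    exact integral_sub hKg₁ hKg₂
  rw [integral_mul_sub_const hKν hKū] at hsub hsol
  rw [integral_mul_sub_const hKμ hKg₁] at hsub
  rw [integral_mul_sub_const hKμ hKg₂] at hsol
  rw [integral_mul_sub_const hKμ hKg, hdiff]
  linarith

section Kernel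

variable {G : Type*} [AddGroup G] [MeasurableSpace G] [MeasurableAdd₂ G] [MeasurableNeg G]
  {μ : Measure G} [μ.IsAddLeftInvariant] {J : G → ℝ}

theorem MeasureTheory.AEStronglyMeasurable.comp_sub_prod [SFinite μ] (hJ : AEStronglyMeasurable J μ)
    {ν₁ ν₂ : Measure G} [SFinite ν₂] (h₁ : ν₁ ≪ μ) (h₂ : ν₂ ≪ μ) :
    AEStronglyMeasurable (fun q : G × G => J (q.1 - q.2)) (ν₁.prod ν₂) :=
  hJ.comp_quasiMeasurePreserving ((quasiMeasurePreserving_sub μ μ).mono_left (h₁.prod h₂))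

theorem MeasureTheory.AEStronglyMeasurable.setIntegral_comp_sub [SFinite μ]
    (hJ : AEStronglyMeasurable J μ) (s t : Set G) :
    AEStronglyMeasurable (fun x => ∫ y in t, J (x - y) ∂μ) (μ.restrict s) :=
  (hJ.comp_sub_prod Measure.restrict_le_self.absolutelyContinuous
    Measure.restrict_le_self.absolutelyContinuous).integral_prod_right'

theorem posPart_energy_eq_zero_of_le_setIntegral_comp_sub [SFinite μ] {S T : Set G}
    [IsFiniteMeasure (μ.restrict T)] (hJ_meas : AEStronglyMeasurable J μ)
    (hJ_nonneg : ∀ z, 0 ≤ J z) {M : ℝ} (hJ_le : ∀ z, J z ≤ M) (hJ_symm : ∀ z, J (-z) = J z)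
    {w : G → ℝ} (hw : MemLp w 2 (μ.restrict T))
    (h : ∀ᵐ x ∂μ.restrict T,
      (∫ y in S, J (x - y) ∂μ) / 2 * w x ≤ ∫ y in T, J (x - y) * (w y - w x) ∂μ) :
    (fun x => (∫ y in S, J (x - y) ∂μ) / 2 * max (w x) 0 ^ 2) =ᵐ[μ.restrict T] 0 ∧
      (fun q : G × G => J (q.1 - q.2) * (max (w q.2) 0 - max (w q.1) 0) ^ 2)
        =ᵐ[(μ.restrict T).prod (μ.restrict T)] 0 := by
  have ha_meas := hJ_meas.setIntegral_comp_sub T S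
  exact posPart_energy_eq_zero_of_le_integral_kernel (k := fun x y => J (x - y))
    (hJ_meas.comp_sub_prod Measure.restrict_le_self.absolutelyContinuous
      Measure.restrict_le_self.absolutelyContinuous)
    (fun _ _ => hJ_nonneg _) (fun _ _ => hJ_le _) (fun x y => by rw [← neg_sub, hJ_symm])
    (by fun_prop) (fun x => div_nonneg (integral_nonneg fun y => hJ_nonneg _) zero_le_two) hw h

theorem half_setIntegral_comp_sub_mul_le_of_le_of_eq [μ.IsNegInvariant] (hJ_int : Integrable J μ)
    {M : ℝ} (hJ_bdd : ∀ z, ‖J z‖ ≤ M) {S T : Set G} {ū g₁ g₂ : G → ℝ} (hū : Integrable ū μ)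
    (hg₁ : IntegrableOn g₁ T μ) (hg₂ : IntegrableOn g₂ T μ) {x : G} {F c₁ c₂ : ℝ}
    (hsub : F ≤ ∫ y in S, J (x - y) * (ū y - c₁) ∂μ + 2 * ∫ y in T, J (x - y) * (g₁ y - c₁) ∂μ)
    (hsol : F = ∫ y in S, J (x - y) * (ū y - c₂) ∂μ + 2 * ∫ y in T, J (x - y) * (g₂ y - c₂) ∂μ) :
    (∫ y in S, J (x - y) ∂μ) / 2 * (c₁ - c₂) ≤
      ∫ y in T, J (x - y) * (g₁ y - g₂ y - (c₁ - c₂)) ∂μ := by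
  have hJx := hJ_int.comp_sub_left x
  have hJg : ∀ {g : G → ℝ} {s : Set G}, IntegrableOn g s μ →
      IntegrableOn (fun y => J (x - y) * g y) s μ := fun hg =>
    hg.bdd_mul hJx.aestronglyMeasurable.restrict (ae_of_all _ fun _ => hJ_bdd _)
  exact half_integral_mul_sub_le_of_le_of_eq hJx.integrableOn (hJg hū.integrableOn)
    hJx.integrableOn (hJg hg₁) (hJg hg₂) hsub hsol

end Kernel

theorem setIntegral_pos_of_isOpen_subset {X : Type*} [TopologicalSpace X] [MeasurableSpace X]
    {μ : Measure X} [μ.IsOpenPosMeasure] {f : X → ℝ} (hf_nonneg : ∀ y, 0 ≤ f y)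
    (hf : Integrable f μ) {S U : Set X} (hU : IsOpen U) (hUne : U.Nonempty) (hUS : U ⊆ S)
    (hfU : ∀ y ∈ U, 0 < f y) : 0 < ∫ y in S, f y ∂μ :=
  (setIntegral_pos_iff_support_of_nonneg_ae (ae_of_all _ hf_nonneg) hf.integrableOn).2 <|
    (hU.measure_pos μ hUne).trans_le (measure_mono fun y hy => ⟨(hfU y hy).ne', hUS hy⟩)

theorem setIntegral_comp_sub_pos_of_dist_lt {E : Type*} [NormedAddCommGroup E] [MeasurableSpace E]
    [OpensMeasurableSpace E] {μ : Measure E} [μ.IsOpenPosMeasure] {J : E → ℝ} {c δ : ℝ}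
    (hJ_nonneg : ∀ z, 0 ≤ J z) (hc : 0 < c) (hJc : ∀ z, ‖z‖ ≤ 2 * δ → c ≤ J z)
    {U S : Set E} (hU : IsOpen U) (hUS : U ⊆ S) {x₀ y₀ x : E} (hx₀ : x₀ ∈ U)
    (hx₀y₀ : dist x₀ y₀ < δ) (hx : x ∈ ball y₀ (δ / 2)) (hJx : Integrable (fun z => J (x - z)) μ) :
    0 < ∫ z in S, J (x - z) ∂μ := by
  have hδ : 0 < δ := dist_nonneg.trans_lt hx₀y₀
  refine setIntegral_pos_of_isOpen_subset (fun _ => hJ_nonneg _) hJx (hU.inter isOpen_ball)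
    ⟨x₀, hx₀, mem_ball_self (half_pos hδ)⟩ (inter_subset_left.trans hUS) fun z hz => ?_
  refine hc.trans_le (hJc _ ?_)
  rw [← dist_eq_norm]
  calc dist x z ≤ dist x y₀ + dist y₀ x₀ + dist x₀ z := dist_triangle4 _ _ _ _
    _ ≤ 2 * δ := by linarith [mem_ball.1 hx, mem_ball'.1 hz.2, dist_comm x₀ y₀]

theorem ae_ae_eq_of_kernel_mul_sq_eq_zero {E : Type*} [NormedAddCommGroup E] [MeasurableSpace E]
    {μ : Measure E} [SFinite μ] {J p : E → ℝ} {c δ : ℝ} (hc : 0 < c)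
    (hJc : ∀ z, ‖z‖ ≤ 2 * δ → c ≤ J z)
    (h : (fun q : E × E => J (q.1 - q.2) * (p q.2 - p q.1) ^ 2) =ᵐ[μ.prod μ] 0) :
    ∀ᵐ x ∂μ, ∀ᵐ y ∂μ, dist x y < 2 * δ → p y = p x :=
  Measure.ae_ae_of_ae_prod <| h.mono fun q (hq : _ = _) (hlt : dist q.1 q.2 < 2 * δ) => by
    have hJ : 0 < J (q.1 - q.2) := hc.trans_le (hJc _ (dist_eq_norm q.1 q.2 ▸ hlt.le))
    simpa [hJ.ne', sub_eq_zero] using hq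

section Propagation

variable {E : Type*} [MetricSpace E] [MeasurableSpace E] {δ : ℝ} {P : E → Prop}

theorem ae_ball_of_measure_ne_zero {μ : Measure E}
    (hpair : ∀ᵐ x ∂μ, ∀ᵐ y ∂μ, dist x y < 2 * δ → P x → P y) {x₀ : E}
    (h : μ {y | y ∈ ball x₀ δ ∧ P y} ≠ 0) : ∀ᵐ y ∂μ, y ∈ ball x₀ δ → P y := by
  obtain ⟨x, ⟨hx, hPx⟩, hx_pair⟩ :=
    Measure.exists_mem_of_measure_ne_zero_of_ae h (ae_restrict_of_ae hpair)
  filter_upwards [hx_pair] with y hy hy_ball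
  refine hy ?_ hPx
  calc dist x y ≤ dist x x₀ + dist y x₀ := dist_triangle_right _ _ _
    _ < δ + δ := add_lt_add hx hy_ball
    _ = 2 * δ := by ring

theorem ae_restrict_of_forall_ae_ball [SecondCountableTopology E] {μ : Measure E} {Ω : Set E}
    (hΩ : MeasurableSet Ω) (hδ : 0 < δ) (h : ∀ x ∈ Ω, ∀ᵐ y ∂μ.restrict Ω, y ∈ ball x δ → P y) :
    ∀ᵐ y ∂μ.restrict Ω, P y := by
  rw [ae_restrict_iff' hΩ, ae_iff]
  refine measure_null_of_locally_null _ fun x hx => ?_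
  simp only [mem_ofPred_eq, Classical.not_imp] at hx
  refine ⟨{y | ¬(y ∈ Ω → P y)} ∩ ball x δ, inter_mem_nhdsWithin _ (ball_mem_nhds x hδ), ?_⟩
  have hx_ball := h x hx.1
  rw [ae_restrict_iff' hΩ, ae_iff] at hx_ball
  refine measure_mono_null (fun y hy => ?_) hx_ball
  simp only [mem_inter_iff, mem_ofPred_eq, Classical.not_imp] at hy ⊢
  exact ⟨hy.1.1, hy.2, hy.1.2⟩

variable [OpensMeasurableSpace E] {ν : Measure E} [ν.IsOpenPosMeasure] {Ω : Set E}

theorem ae_ball_of_ae_ball_of_mem (hΩ : IsOpen Ω) (hδ : 0 < δ)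
    (hpair : ∀ᵐ x ∂ν.restrict Ω, ∀ᵐ y ∂ν.restrict Ω, dist x y < 2 * δ → P x → P y)
    {x₀ : E} (hx₀ : x₀ ∈ Ω) {r : ℝ} (hr : 0 < r)
    (h : ∀ᵐ y ∂ν.restrict Ω, y ∈ ball x₀ r → P y) :
    ∀ᵐ y ∂ν.restrict Ω, y ∈ ball x₀ δ → P y := by
  refine ae_ball_of_measure_ne_zero hpair fun h₀ => ?_
  have hpos : ν.restrict Ω (ball x₀ (min r δ)) ≠ 0 := by
    rw [Measure.restrict_apply measurableSet_ball]
    exact (isOpen_ball.inter hΩ).measure_ne_zero ν ⟨x₀, mem_ball_self (lt_min hr hδ), hx₀⟩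
  apply hpos
  rw [measure_eq_zero_iff_ae_notMem] at h₀ ⊢
  filter_upwards [h, h₀] with y hy hy₀ hy_ball
  exact hy₀ ⟨ball_subset_ball (min_le_right _ _) hy_ball,
    hy (ball_subset_ball (min_le_left _ _) hy_ball)⟩

end Propagation

namespace DeltaConnected

variable {N : ℕ} {δ : ℝ} {Ω : Set (EuclideanSpace ℝ (Fin N))}

theorem forall_of_dist_lt (hconn : DeltaConnected δ Ω) (hΩ : IsOpen Ω) (hδ : 0 < δ)
    {Q : EuclideanSpace ℝ (Fin N) → Prop} (hQ : ∀ x ∈ Ω, ∀ y ∈ Ω, dist x y < δ → Q x → Q y)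
    {x₀ : EuclideanSpace ℝ (Fin N)} (hx₀ : x₀ ∈ Ω) (hQx₀ : Q x₀) : ∀ x ∈ Ω, Q x := by
  have hloc : ∀ x ∈ Ω, ∃ r > 0, ball x r ⊆ Ω ∧ ∀ y ∈ ball x r, (Q y ↔ Q x) := by
    intro x hx
    obtain ⟨r, hr, hrΩ⟩ := Metric.isOpen_iff.1 hΩ x hx
    have hsub : ball x (min r δ) ⊆ Ω := (ball_subset_ball (min_le_left _ _)).trans hrΩ
    refine ⟨min r δ, lt_min hr hδ, hsub, fun y hy => ?_⟩
    have hyx : dist y x < δ := (mem_ball.1 hy).trans_le (min_le_right _ _)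
    exact ⟨hQ y (hsub hy) x hx hyx, hQ x hx y (hsub hy) (dist_comm x y ▸ hyx)⟩
  by_contra hne
  push Not at hne
  obtain ⟨x₁, hx₁, hQx₁⟩ := hne
  refine hconn ⟨Ω ∩ {x | Q x}, Ω ∩ {x | ¬Q x}, ?_, ?_, ⟨x₀, hx₀, hQx₀⟩, ⟨x₁, hx₁, hQx₁⟩,
    ?_, ?_, ?_⟩
  · refine Metric.isOpen_iff.2 fun x hx => ?_
    obtain ⟨r, hr, hrΩ, hrQ⟩ := hloc x hx.1
    exact ⟨r, hr, fun y hy => ⟨hrΩ hy, (hrQ y hy).2 hx.2⟩⟩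
  · refine Metric.isOpen_iff.2 fun x hx => ?_
    obtain ⟨r, hr, hrΩ, hrQ⟩ := hloc x hx.1
    exact ⟨r, hr, fun y hy => ⟨hrΩ hy, mt (hrQ y hy).1 hx.2⟩⟩
  · exact inter_union_compl Ω {x | Q x}
  · ext x
    simp only [mem_inter_iff, mem_ofPred_eq, mem_empty_iff_false, iff_false]
    tauto
  · rintro x ⟨hx, hQx⟩ y ⟨hy, hQy⟩
    by_contra hlt
    exact hQy (hQ x hx y hy (not_le.1 hlt) hQx)

theorem ae_of_ae_pair (hconn : DeltaConnected δ Ω) (hΩ : IsOpen Ω) (hδ : 0 < δ)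
    {P : EuclideanSpace ℝ (Fin N) → Prop}
    (hpair : ∀ᵐ x ∂volume.restrict Ω, ∀ᵐ y ∂volume.restrict Ω, dist x y < 2 * δ → P x → P y)
    {x₀ : EuclideanSpace ℝ (Fin N)} (hx₀ : x₀ ∈ Ω) {r : ℝ} (hr : 0 < r)
    (hseed : ∀ᵐ y ∂volume.restrict Ω, y ∈ ball x₀ r → P y) :
    ∀ᵐ y ∂volume.restrict Ω, P y := by
  refine ae_restrict_of_forall_ae_ball hΩ.measurableSet hδ <|
    hconn.forall_of_dist_lt hΩ hδ (fun x _ y hy hxy hx_ball => ?_) hx₀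
      (ae_ball_of_ae_ball_of_mem hΩ hδ hpair hx₀ hr hseed)
  refine ae_ball_of_ae_ball_of_mem hΩ hδ hpair hy (sub_pos.2 hxy) ?_
  filter_upwards [hx_ball] with z hz hz_ball
  exact hz (ball_subset_ball' (by rw [dist_comm]; linarith) hz_ball)

end DeltaConnected

theorem nonlocal_comparison_principle_general {N : ℕ} (δ : ℝ) (hδ : 0 < δ)
    (Ωl Ωnl : Set (EuclideanSpace ℝ (Fin N)))
    (hΩl_open : IsOpen Ωl) (hΩl_bdd : Bornology.IsBounded Ωl)
    (hΩnl_open : IsOpen Ωnl) (hΩnl_bdd : Bornology.IsBounded Ωnl)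
    (hdisj : Ωl ∩ Ωnl = ∅)
    (hΩnl_conn : DeltaConnected δ Ωnl)
    (hP1 : ∃ x ∈ Ωl, ∃ y ∈ Ωnl, dist x y < δ)
    (J : EuclideanSpace ℝ (Fin N) → ℝ)
    (hJ_nonneg : ∀ z, 0 ≤ J z)
    (hJ_symm : ∀ z, J (-z) = J z)
    (hJ_bdd : ∃ M : ℝ, ∀ z, J z ≤ M)
    (hJ_int : Integrable J)
    (hJ1 : ∃ c > (0 : ℝ), ∀ z, ‖z‖ ≤ 2 * δ → c ≤ J z)
    (f : EuclideanSpace ℝ (Fin N) → ℝ)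
    (u : EuclideanSpace ℝ (Fin N) → ℝ) (hu : MemLp u 2 (volume.restrict Ωl))
    (vsub : EuclideanSpace ℝ (Fin N) → ℝ) (hvsub : MemLp vsub 2 (volume.restrict Ωnl))
    (v : EuclideanSpace ℝ (Fin N) → ℝ) (hv : MemLp v 2 (volume.restrict Ωnl))
    (hsub : ∀ᵐ x ∂(volume.restrict Ωnl),
      -f x ≤ (∫ y in Ωnlᶜ, J (x - y) * (Set.indicator Ωl u y - vsub x)) +
        2 * ∫ y in Ωnl, J (x - y) * (vsub y - vsub x))
    (hsol : ∀ᵐ x ∂(volume.restrict Ωnl),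
      -f x = (∫ y in Ωnlᶜ, J (x - y) * (Set.indicator Ωl u y - v x)) +
        2 * ∫ y in Ωnl, J (x - y) * (v y - v x)) :
    ∀ᵐ x ∂(volume.restrict Ωnl), vsub x ≤ v x := by
  obtain ⟨M, hM⟩ := hJ_bdd
  obtain ⟨c, hc, hJc⟩ := hJ1
  obtain ⟨x₀, hx₀, y₀, hy₀, hx₀y₀⟩ := hP1
  have : IsFiniteMeasure (volume.restrict Ωnl) :=
    isFiniteMeasure_restrict.2 hΩnl_bdd.measure_lt_top.ne
  have : IsFiniteMeasure (volume.restrict Ωl) :=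
    isFiniteMeasure_restrict.2 hΩl_bdd.measure_lt_top.ne
  have hū : Integrable (Ωl.indicator u) :=
    (integrable_indicator_iff hΩl_open.measurableSet).2 (hu.integrable one_le_two)
  have hineq : ∀ᵐ x ∂volume.restrict Ωnl, (∫ y in Ωnlᶜ, J (x - y)) / 2 * (vsub x - v x) ≤
      ∫ y in Ωnl, J (x - y) * ((vsub y - v y) - (vsub x - v x)) := by
    filter_upwards [hsub, hsol] with x hsubx hsolx
    exact half_setIntegral_comp_sub_mul_le_of_le_of_eq hJ_int
      (fun z => (Real.norm_of_nonneg (hJ_nonneg z)).trans_le (hM z)) hū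
      (hvsub.integrable one_le_two) (hv.integrable one_le_two) hsubx hsolx
  obtain ⟨hA_zero, hJ_zero⟩ := posPart_energy_eq_zero_of_le_setIntegral_comp_sub
    hJ_int.aestronglyMeasurable hJ_nonneg hM hJ_symm (hvsub.sub hv) hineq
  have hseed : ∀ᵐ y ∂volume.restrict Ωnl, y ∈ ball y₀ (δ / 2) → max (vsub y - v y) 0 = 0 := by
    filter_upwards [hA_zero] with y hy hy_ball
    have hA := setIntegral_comp_sub_pos_of_dist_lt (S := Ωnlᶜ) hJ_nonneg hc hJc hΩl_open
      (fun z hz hz' => hdisj.subset ⟨hz, hz'⟩) hx₀ hx₀y₀ hy_ball (hJ_int.comp_sub_left y)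
    simpa [hA.ne'] using hy
  have hzero := hΩnl_conn.ae_of_ae_pair hΩnl_open hδ
    ((ae_ae_eq_of_kernel_mul_sq_eq_zero hc hJc hJ_zero).mono fun x hx =>
      hx.mono fun y hy hxy hpx => (hy hxy).trans hpx) hy₀ (half_pos hδ) hseed
  filter_upwards [hzero] with x hx
  simpa [sub_nonpos] using hx

/-- Comparison principle for the nonlocal problem: a subsolution lies a.e. below a solution
with the same data `(f, u)`. -/
theorem nonlocal_comparison_principle {N : ℕ} (δ : ℝ) (hδ : 0 < δ)
    (Ωl Ωnl : Set (EuclideanSpace ℝ (Fin N)))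
    (hΩl_open : IsOpen Ωl) (hΩl_bdd : Bornology.IsBounded Ωl)
    (hΩnl_open : IsOpen Ωnl) (hΩnl_bdd : Bornology.IsBounded Ωnl)
    (hdisj : Ωl ∩ Ωnl = ∅)
    (hΩnl_conn : DeltaConnected δ Ωnl)
    (hP1 : ∃ x ∈ Ωl, ∃ y ∈ Ωnl, dist x y < δ)
    (J : EuclideanSpace ℝ (Fin N) → ℝ)
    (hJ_nonneg : ∀ z, 0 ≤ J z)
    (hJ_symm : ∀ z, J (-z) = J z)
    (hJ_bdd : ∃ M : ℝ, ∀ z, J z ≤ M)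
    (hJ_int : Integrable J)
    (hJ1 : ∃ c > (0 : ℝ), ∀ z, ‖z‖ ≤ 2 * δ → c ≤ J z)
    (hJ2 : ∃ K : Lp ℝ 2 (volume.restrict Ωnl) →L[ℝ] Lp ℝ 2 (volume.restrict Ωnl),
      IsCompactOperator K ∧ ∀ w : Lp ℝ 2 (volume.restrict Ωnl),
        ∀ᵐ x ∂(volume.restrict Ωnl), K w x = ∫ y in Ωnl, J (x - y) * w y)
    (f : EuclideanSpace ℝ (Fin N) → ℝ) (hf : MemLp f 2 (volume.restrict Ωnl))
    (u : EuclideanSpace ℝ (Fin N) → ℝ) (hu : MemLp u 2 (volume.restrict Ωl))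
    (vsub : EuclideanSpace ℝ (Fin N) → ℝ) (hvsub : MemLp vsub 2 (volume.restrict Ωnl))
    (v : EuclideanSpace ℝ (Fin N) → ℝ) (hv : MemLp v 2 (volume.restrict Ωnl))
    (hsub : ∀ᵐ x ∂(volume.restrict Ωnl),
      -f x ≤ (∫ y in Ωnlᶜ, J (x - y) * (Set.indicator Ωl u y - vsub x)) +
        2 * ∫ y in Ωnl, J (x - y) * (vsub y - vsub x))
    (hsol : ∀ᵐ x ∂(volume.restrict Ωnl),
      -f x = (∫ y in Ωnlᶜ, J (x - y) * (Set.indicator Ωl u y - v x)) +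
        2 * ∫ y in Ωnl, J (x - y) * (v y - v x)) :
    ∀ᵐ x ∂(volume.restrict Ωnl), vsub x ≤ v x :=
  nonlocal_comparison_principle_general δ hδ Ωl Ωnl hΩl_open hΩl_bdd hΩnl_open hΩnl_bdd hdisj
    hΩnl_conn hP1 J hJ_nonneg hJ_symm hJ_bdd hJ_int hJ1 f u hu vsub hvsub v hv hsub hsol
end
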